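/- arXiv:2403.00465 — 12 statements merged into one kernel-verified Lean document; each statement's English description precedes it below -/
import Mathlib

section
/- Let (P,R) be a finite simple graph, let g : R → ℝ assign a positive desire growth rate to each edge, and let h > 0 be a real number with g(e) ≤ h for every edge e. Define frequencies f : R → ℕ by f(e) = ⌊h / g(e)⌋ (so f(e) ≥ 1). Then: (i) every schedule S that is valid for the DPS instance (P,R,f) is a valid schedule for the OPS instance (P,R,g) with heat h(S) ≤ h; and (ii) every schedule S whose heat for the OPS instance (P,R,g) is strictly greater than h is not a valid schedule for the DPS instance (P,R,f). -/
/-!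
A DPS-valid schedule meets every edge `e` in each window of `f e` consecutive days, so no window
missing `e` has length `f e`; hence `r(e) ≤ f e = ⌊h / g e⌋` and `g e · r(e) ≤ h`. Part (ii) is
the contrapositive of part (i).
-/

open scoped ENNReal BigOperators

namespace PolySched

variable {V : Type*}

/-- A set of edges is a matching in `G`: all edges belong to `G` and no two
distinct edges share an endpoint. -/
def IsMatchingIn (G : SimpleGraph V) (M : Set (Sym2 V)) : Prop :=
  M ⊆ G.edgeSet ∧ M.Pairwise fun e e' => ∀ v, v ∈ e → v ∉ e'

/-- A schedule is valid for the OPS instance on `G` if each day is a matching. -/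
def OPSValid (G : SimpleGraph V) (S : ℕ → Set (Sym2 V)) : Prop :=
  ∀ t, IsMatchingIn G (S t)

/-- A schedule is valid for the DPS instance `(G, f)`. -/
def DPSValid (G : SimpleGraph V) (f : Sym2 V → ℕ) (S : ℕ → Set (Sym2 V)) : Prop :=
  OPSValid G S ∧ ∀ e ∈ G.edgeSet, ∀ t : ℕ, ∃ i < f e, e ∈ S (t + i)

/-- Recurrence time of edge `e` under schedule `S`: the supremum of `d+1` over
all `d` such that some window of `d` consecutive days misses `e`. -/
noncomputable def recTime (S : ℕ → Set (Sym2 V)) (e : Sym2 V) : ℝ≥0∞ :=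
  ⨆ d ∈ {d : ℕ | ∃ t : ℕ, ∀ i < d, e ∉ S (t + i)}, ((d : ℝ≥0∞) + 1)

/-- Heat of a schedule for the OPS instance `(G, g)`. -/
noncomputable def heat (G : SimpleGraph V) (g : Sym2 V → ℝ) (S : ℕ → Set (Sym2 V)) : ℝ≥0∞ :=
  ⨆ e ∈ G.edgeSet, ENNReal.ofReal (g e) * recTime S e

/- No sign conditions are needed: for `a ≤ 0` the factor `ENNReal.ofReal a` vanishes, and for
`b / a < 0` the floor does. -/
theorem ofReal_mul_floor_div_le (a b : ℝ) :
    ENNReal.ofReal a * ⌊b / a⌋₊ ≤ ENNReal.ofReal b := by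
  rcases le_or_gt a 0 with ha | ha
  · simp [ENNReal.ofReal_of_nonpos ha]
  rcases le_or_gt 0 b with hb | hb
  · rw [← ENNReal.ofReal_natCast, ← ENNReal.ofReal_mul ha.le]
    refine ENNReal.ofReal_le_ofReal ?_
    calc a * ⌊b / a⌋₊ ≤ a * (b / a) := by gcongr; exact Nat.floor_le (by positivity)
      _ = b := mul_div_cancel₀ b ha.ne'
  · simp [Nat.floor_of_nonpos (div_neg_of_neg_of_pos hb ha).le]

theorem recTime_le_of_forall_exists_mem {S : ℕ → Set (Sym2 V)} {e : Sym2 V} {n : ℕ}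
    (hS : ∀ t, ∃ i < n, e ∈ S (t + i)) : recTime S e ≤ n := by
  refine iSup₂_le fun d ⟨t, hmiss⟩ => ?_
  obtain ⟨i, hin, hi⟩ := hS t
  have hdn : d < n := lt_of_not_ge fun hnd => hmiss i (hin.trans_le hnd) hi
  exact_mod_cast hdn

theorem heat_le_of_dpsValid {G : SimpleGraph V} {g : Sym2 V → ℝ} {h : ℝ} {f : Sym2 V → ℕ}
    (hf : ∀ e ∈ G.edgeSet, f e = ⌊h / g e⌋₊) {S : ℕ → Set (Sym2 V)} (hS : DPSValid G f S) :
    heat G g S ≤ ENNReal.ofReal h := by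
  refine iSup₂_le fun e he => ?_
  calc ENNReal.ofReal (g e) * recTime S e
      ≤ ENNReal.ofReal (g e) * ⌊h / g e⌋₊ := by
        rw [← hf e he]; gcongr; exact recTime_le_of_forall_exists_mem (hS.2 e he)
    _ ≤ ENNReal.ofReal h := ofReal_mul_floor_div_le _ _

theorem ops_to_dps_general {V : Type*} (G : SimpleGraph V) (g : Sym2 V → ℝ) (h : ℝ)
    (f : Sym2 V → ℕ) (hf : ∀ e ∈ G.edgeSet, f e = ⌊h / g e⌋₊) :
    (∀ S : ℕ → Set (Sym2 V), DPSValid G f S →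
        OPSValid G S ∧ heat G g S ≤ ENNReal.ofReal h) ∧
    (∀ S : ℕ → Set (Sym2 V), ENNReal.ofReal h < heat G g S → ¬ DPSValid G f S) :=
  ⟨fun _ hS => ⟨hS.1, heat_le_of_dpsValid hf hS⟩,
    fun _ hlt hS => (heat_le_of_dpsValid hf hS).not_gt hlt⟩

/-- OPS-to-DPS conversion (Lemma "OPS to DPS").
With frequencies `f e = ⌊h / g e⌋`, (i) any valid DPS schedule is a valid OPS
schedule of heat at most `h`; (ii) any schedule with OPS heat `> h` is not
valid for the DPS instance. -/
theorem ops_to_dps {V : Type*} (G : SimpleGraph V) (g : Sym2 V → ℝ) (h : ℝ)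
    (hg : ∀ e ∈ G.edgeSet, 0 < g e) (hh : 0 < h)
    (hgh : ∀ e ∈ G.edgeSet, g e ≤ h)
    (f : Sym2 V → ℕ) (hf : ∀ e ∈ G.edgeSet, f e = ⌊h / g e⌋₊) :
    (∀ S : ℕ → Set (Sym2 V), DPSValid G f S →
        OPSValid G S ∧ heat G g S ≤ ENNReal.ofReal h) ∧
    (∀ S : ℕ → Set (Sym2 V), ENNReal.ofReal h < heat G g S → ¬ DPSValid G f S) :=
  ops_to_dps_general G g h f hf

end PolySched
end

section
/- Let (P,R,g) be an OPS instance and let S be a valid schedule whose heat h* = h(S) is finite and positive and optimal, i.e. h(S) ≤ h(S') for every valid schedule S'. Then there exists a function g' : R → ℝ such that every value g'(e) is a unit fraction (g'(e) = 1/m for some positive integer m), g'(e) ≥ g(e)/h* for every edge e, the schedule S has heat exactly 1 for the OPS instance (P,R,g'), and every valid schedule for (P,R,g') has heat at least 1 (so (P,R,g') has optimal heat 1, attained by S). -/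
open scoped ENNReal BigOperators

namespace PolySched

variable {V : Type*}

private lemma recTime_term_le {S : ℕ → Set (Sym2 V)} {e : Sym2 V} {d : ℕ}
    (hd : d ∈ {d : ℕ | ∃ t : ℕ, ∀ i < d, e ∉ S (t + i)}) :
    ((d : ℝ≥0∞) + 1) ≤ recTime S e :=
  le_iSup₂ (f := fun d (_ : d ∈ {d : ℕ | ∃ t : ℕ, ∀ i < d, e ∉ S (t + i)}) =>
    ((d : ℝ≥0∞) + 1)) d hd

private lemma one_le_recTime (S : ℕ → Set (Sym2 V)) (e : Sym2 V) : 1 ≤ recTime S e := by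
  have h0 : (0:ℕ) ∈ {d : ℕ | ∃ t : ℕ, ∀ i < d, e ∉ S (t + i)} :=
    ⟨0, fun i hi => absurd hi (Nat.not_lt_zero i)⟩
  simpa using recTime_term_le h0

private lemma recTime_nat (S : ℕ → Set (Sym2 V)) (e : Sym2 V)
    (hfin : recTime S e ≠ ⊤) : ∃ m : ℕ, 0 < m ∧ recTime S e = (m : ℝ≥0∞) := by
  set A := {d : ℕ | ∃ t : ℕ, ∀ i < d, e ∉ S (t + i)} with hA
  have h0 : (0:ℕ) ∈ A := ⟨0, fun i hi => absurd hi (Nat.not_lt_zero i)⟩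
  obtain ⟨N, hN⟩ := ENNReal.exists_nat_gt hfin
  have hbdd : BddAbove A := by
    refine ⟨N, fun d hd => ?_⟩
    have hle : ((d:ℝ≥0∞) + 1) ≤ recTime S e := recTime_term_le hd
    have hlt : (d:ℝ≥0∞) < N :=
      lt_of_lt_of_le (ENNReal.lt_add_right (by simp) one_ne_zero) (hle.trans hN.le)
    exact_mod_cast hlt.le
  have hmem : sSup A ∈ A := Nat.sSup_mem ⟨0, h0⟩ hbdd
  refine ⟨sSup A + 1, Nat.succ_pos _, le_antisymm ?_ ?_⟩
  · refine iSup₂_le fun d hd => ?_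
    have hds : d ≤ sSup A := le_csSup hbdd hd
    have : ((d:ℝ≥0∞)) ≤ (((sSup A : ℕ)) : ℝ≥0∞) := by exact_mod_cast hds
    push_cast
    exact add_le_add_left this 1
  · have := recTime_term_le hmem
    push_cast
    exact this

/-- Normal form for OPS instances (Lemma "Normal Form OPS").
If `S` is an optimal schedule of finite positive heat `h*`, there is an
equivalent instance with unit-fraction growth rates, optimal heat 1, attained by `S`. -/
theorem normal_form_ops {V : Type*} (G : SimpleGraph V) (g : Sym2 V → ℝ)
    (hg : ∀ e ∈ G.edgeSet, 0 < g e)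
    (S : ℕ → Set (Sym2 V)) (hS : OPSValid G S)
    (hstar : ℝ) (hpos : 0 < hstar)
    (hheat : heat G g S = ENNReal.ofReal hstar)
    (hopt : ∀ S', OPSValid G S' → heat G g S ≤ heat G g S') :
    ∃ g' : Sym2 V → ℝ,
      (∀ e ∈ G.edgeSet, ∃ m : ℕ, 0 < m ∧ g' e = 1 / (m : ℝ)) ∧
      (∀ e ∈ G.edgeSet, g e / hstar ≤ g' e) ∧
      heat G g' S = 1 ∧
      (∀ S', OPSValid G S' → 1 ≤ heat G g' S') := by
  classical
  -- `ofReal hstar` is positive and finite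
  have hh0 : ENNReal.ofReal hstar ≠ 0 := by
    simp [ENNReal.ofReal_eq_zero, not_le, hpos]
  have hhtop : ENNReal.ofReal hstar ≠ ⊤ := ENNReal.ofReal_ne_top
  -- the edge set is nonempty
  have hne : ∃ e, e ∈ G.edgeSet := by
    by_contra h
    push_neg at h
    have h0 : heat G g S = 0 := by
      rw [heat]
      simp [h]
    rw [hheat] at h0
    exact hh0 h0
  -- key per-edge facts
  have key : ∀ e ∈ G.edgeSet, ∃ m : ℕ, 0 < m ∧ recTime S e = (m : ℝ≥0∞) ∧
      ENNReal.ofReal (g e) * (m : ℝ≥0∞) ≤ ENNReal.ofReal hstar := by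
    intro e he
    have hterm : ENNReal.ofReal (g e) * recTime S e ≤ ENNReal.ofReal hstar := by
      rw [← hheat, heat]
      exact le_iSup₂ (f := fun e (_ : e ∈ G.edgeSet) =>
        ENNReal.ofReal (g e) * recTime S e) e he
    have hfin : recTime S e ≠ ⊤ := by
      intro htop
      rw [htop, ENNReal.mul_top (by simp [ENNReal.ofReal_eq_zero, not_le, hg e he])] at hterm
      exact hhtop (top_le_iff.mp hterm)
    obtain ⟨m, hm, hrec⟩ := recTime_nat S e hfin
    exact ⟨m, hm, hrec, hrec ▸ hterm⟩
  -- define g'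
  refine ⟨fun e => if he : e ∈ G.edgeSet then 1 / ((key e he).choose : ℝ) else 1, ?_, ?_, ?_, ?_⟩
  · intro e he
    exact ⟨(key e he).choose, (key e he).choose_spec.1, by simp [he]⟩
  · intro e he
    obtain ⟨hm, hrec, hle⟩ := (key e he).choose_spec
    set m := (key e he).choose
    have hmr : (0:ℝ) < m := by exact_mod_cast hm
    have hgm : g e * m ≤ hstar := by
      rw [← ENNReal.ofReal_natCast m, ← ENNReal.ofReal_mul (hg e he).le] at hle
      exact (ENNReal.ofReal_le_ofReal_iff hpos.le).mp hle
    have : g e / hstar ≤ 1 / (m:ℝ) := by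
      rw [div_le_div_iff₀ hpos hmr]
      linarith
    simpa [he] using this
  · -- heat G g' S = 1
    have hterm : ∀ e ∈ G.edgeSet,
        ENNReal.ofReal (if he : e ∈ G.edgeSet then 1 / ((key e he).choose : ℝ) else 1)
          * recTime S e = 1 := by
      intro e he
      obtain ⟨hm, hrec, -⟩ := (key e he).choose_spec
      set m := (key e he).choose
      have hmr : (0:ℝ) < m := by exact_mod_cast hm
      have h1 : ENNReal.ofReal (1 / (m:ℝ)) = ((m:ℝ≥0∞))⁻¹ := by
        rw [one_div, ENNReal.ofReal_inv_of_pos hmr, ENNReal.ofReal_natCast]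
      rw [dif_pos he, h1, hrec]
      exact ENNReal.inv_mul_cancel (by exact_mod_cast hm.ne') (by simp)
    obtain ⟨e₀, he₀⟩ := hne
    rw [heat]
    refine le_antisymm (iSup₂_le fun e he => (hterm e he).le) ?_
    calc (1:ℝ≥0∞) = _ := (hterm e₀ he₀).symm
      _ ≤ _ := le_iSup₂ (f := fun e (_ : e ∈ G.edgeSet) =>
          ENNReal.ofReal (if he : e ∈ G.edgeSet then 1 / ((key e he).choose : ℝ) else 1)
            * recTime S e) e₀ he₀
  · -- optimality
    intro S' hS'
    by_contra hlt
    push_neg at hlt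
    set ρ := heat G (fun e => if he : e ∈ G.edgeSet then 1 / ((key e he).choose : ℝ) else 1) S' with hρ
    have hρ1 : ρ < 1 := hlt
    have hbound : heat G g S' ≤ ENNReal.ofReal hstar * ρ := by
      rw [heat]
      refine iSup₂_le fun e he => ?_
      obtain ⟨hm, hrec, hle⟩ := (key e he).choose_spec
      set m := (key e he).choose
      have hmr : (0:ℝ) < m := by exact_mod_cast hm
      have hm0 : ((m:ℝ≥0∞)) ≠ 0 := by exact_mod_cast hm.ne'
      have hmt : ((m:ℝ≥0∞)) ≠ ⊤ := by simp
      have h1 : ENNReal.ofReal (1 / (m:ℝ)) = ((m:ℝ≥0∞))⁻¹ := by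
        rw [one_div, ENNReal.ofReal_inv_of_pos hmr, ENNReal.ofReal_natCast]
      have htermρ : ((m:ℝ≥0∞))⁻¹ * recTime S' e ≤ ρ := by
        rw [hρ, heat, ← h1]
        have := le_iSup₂ (f := fun e (_ : e ∈ G.edgeSet) =>
          ENNReal.ofReal (if he : e ∈ G.edgeSet then 1 / ((key e he).choose : ℝ) else 1)
            * recTime S' e) e he
        simpa [dif_pos he] using this
      have hr : recTime S' e ≤ (m:ℝ≥0∞) * ρ := by
        calc recTime S' e = (m:ℝ≥0∞) * (((m:ℝ≥0∞))⁻¹ * recTime S' e) := by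
              rw [← mul_assoc, ENNReal.mul_inv_cancel hm0 hmt, one_mul]
          _ ≤ (m:ℝ≥0∞) * ρ := mul_le_mul_right htermρ _
      calc ENNReal.ofReal (g e) * recTime S' e
          ≤ ENNReal.ofReal (g e) * ((m:ℝ≥0∞) * ρ) := mul_le_mul_right hr _
        _ = (ENNReal.ofReal (g e) * (m:ℝ≥0∞)) * ρ := by ring
        _ ≤ ENNReal.ofReal hstar * ρ := mul_le_mul_left hle _
    have hc : heat G g S' < ENNReal.ofReal hstar := by
      refine lt_of_le_of_lt hbound ?_
      calc ENNReal.ofReal hstar * ρ < ENNReal.ofReal hstar * 1 :=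
            ENNReal.mul_lt_mul_right hh0 hhtop hρ1
        _ = ENNReal.ofReal hstar := mul_one _
    have := hopt S' hS'
    rw [hheat] at this
    exact absurd (lt_of_le_of_lt this hc) (lt_irrefl _)


end PolySched
end

section
/- Let (P,R) be a finite simple graph and consider the unweighted OPS instance (P,R,g) with g(e) = 1 for every edge e, and let h be a positive integer. Then (P,R,g) admits a valid schedule of heat at most h if and only if the graph (P,R) admits a proper edge colouring with h colours (i.e., its chromatic index is at most h). -/
/-!
With unit growth rates, heat at most `h` says exactly that every edge occurs in every window of
`h` consecutive days. Labelling each edge by one of the days `0, …, h - 1` on which it is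
scheduled is then a proper edge colouring, because each day is a matching; conversely, cycling
through the colour classes with period `h` is such a schedule.
-/

open scoped ENNReal BigOperators

namespace PolySched

variable {V : Type*}

theorem recTime_le_natCast_iff (S : ℕ → Set (Sym2 V)) (e : Sym2 V) (n : ℕ) :
    recTime S e ≤ n ↔ ∀ t, ∃ i < n, e ∈ S (t + i) := by
  simp only [recTime, iSup₂_le_iff, Set.mem_ofPred_eq]
  constructor
  · intro hle t
    by_contra! hmiss
    have hcontra := hle n ⟨t, hmiss⟩
    norm_cast at hcontra
    omega
  · rintro hwin d ⟨t, hmiss⟩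
    obtain ⟨i, hi, he⟩ := hwin t
    have hdi : d ≤ i := by
      by_contra! hid
      exact hmiss i hid he
    exact_mod_cast (by omega : d + 1 ≤ n)

theorem heat_one_le_natCast_iff (G : SimpleGraph V) (S : ℕ → Set (Sym2 V)) (n : ℕ) :
    heat G (fun _ => 1) S ≤ n ↔ ∀ e ∈ G.edgeSet, ∀ t, ∃ i < n, e ∈ S (t + i) := by
  simp only [heat, ENNReal.ofReal_one, one_mul, iSup₂_le_iff, recTime_le_natCast_iff]

theorem IsMatchingIn.eq_of_mem {G : SimpleGraph V} {M : Set (Sym2 V)} (hM : IsMatchingIn G M)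
    {e e' : Sym2 V} (he : e ∈ M) (he' : e' ∈ M) {v : V} (hv : v ∈ e) (hv' : v ∈ e') : e = e' := by
  by_contra hne
  exact hM.2 he he' hne v hv hv'

def IsProperEdgeColouring {α : Type*} (G : SimpleGraph V) (c : Sym2 V → α) : Prop :=
  ∀ e ∈ G.edgeSet, ∀ e' ∈ G.edgeSet, e ≠ e' → (∃ v, v ∈ e ∧ v ∈ e') → c e ≠ c e'

theorem exists_isProperEdgeColouring_of_forall_mem {G : SimpleGraph V} {S : ℕ → Set (Sym2 V)}
    (hS : OPSValid G S) {h : ℕ} (hh : 0 < h) (hcover : ∀ e ∈ G.edgeSet, ∃ i < h, e ∈ S i) :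
    ∃ c : Sym2 V → Fin h, IsProperEdgeColouring G c := by
  classical
  choose i hih hi using hcover
  refine ⟨fun e => if he : e ∈ G.edgeSet then ⟨i e he, hih e he⟩ else ⟨0, hh⟩, ?_⟩
  rintro e he e' he' hne ⟨v, hv, hv'⟩ hc
  simp only [dif_pos he, dif_pos he', Fin.mk.injEq] at hc
  exact hne ((hS _).eq_of_mem (hi e he) (hc ▸ hi e' he') hv hv')

def periodicSchedule {h : ℕ} (G : SimpleGraph V) (c : Sym2 V → Fin h) (t : ℕ) : Set (Sym2 V) :=
  {e | e ∈ G.edgeSet ∧ (c e : ℕ) = t % h}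

theorem opsValid_periodicSchedule {G : SimpleGraph V} {h : ℕ} {c : Sym2 V → Fin h}
    (hc : IsProperEdgeColouring G c) : OPSValid G (periodicSchedule G c) := by
  refine fun t => ⟨fun e he => he.1, ?_⟩
  rintro e ⟨he, hct⟩ e' ⟨he', hct'⟩ hne v hv hv'
  exact hc e he e' he' hne ⟨v, hv, hv'⟩ (Fin.ext (hct.trans hct'.symm))

theorem exists_lt_add_mod_eq {h r : ℕ} (hr : r < h) (t : ℕ) : ∃ i < h, (t + i) % h = r := by
  have hpos : 0 < h := by omega
  refine ⟨(r + h - t % h) % h, Nat.mod_lt _ hpos, ?_⟩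
  have hdecomp : t + (r + h - t % h) = r + h * (t / h + 1) := by
    have := Nat.mod_add_div t h
    have := Nat.mod_lt t hpos
    rw [Nat.mul_add, Nat.mul_one]
    omega
  rw [Nat.add_mod_mod, hdecomp, Nat.add_mul_mod_self_left, Nat.mod_eq_of_lt hr]

theorem exists_lt_mem_periodicSchedule {G : SimpleGraph V} {h : ℕ} (c : Sym2 V → Fin h)
    {e : Sym2 V} (he : e ∈ G.edgeSet) (t : ℕ) : ∃ i < h, e ∈ periodicSchedule G c (t + i) := by
  obtain ⟨i, hi, hmod⟩ := exists_lt_add_mod_eq (c e).is_lt t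
  exact ⟨i, hi, he, hmod.symm⟩

/-- Unweighted OPS = edge colouring.
The unweighted OPS instance (all growth rates 1) admits a schedule of heat ≤ h
iff the graph has a proper edge colouring with h colours. -/
theorem unweighted_ops_iff_edge_colouring {V : Type*} (G : SimpleGraph V)
    (h : ℕ) (hh : 0 < h) :
    (∃ S : ℕ → Set (Sym2 V), OPSValid G S ∧
        heat G (fun _ => (1 : ℝ)) S ≤ (h : ℝ≥0∞)) ↔
    (∃ c : Sym2 V → Fin h, ∀ e ∈ G.edgeSet, ∀ e' ∈ G.edgeSet,
        e ≠ e' → (∃ v, v ∈ e ∧ v ∈ e') → c e ≠ c e') := by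
  simp only [heat_one_le_natCast_iff]
  constructor
  · rintro ⟨S, hS, hwindow⟩
    exact exists_isProperEdgeColouring_of_forall_mem hS hh fun e he => by
      simpa using hwindow e he 0
  · rintro ⟨c, hc⟩
    exact ⟨periodicSchedule G c, opsValid_periodicSchedule hc,
      fun e he => exists_lt_mem_periodicSchedule c he⟩

end PolySched
end

section
/- Let (P,R,g) be an OPS instance with R nonempty, and let z : R → ℝ satisfy z_e ∈ [0,1] for all e and Σ_{e∈R} z_e = 1. Let x = max over inclusion-maximal matchings M of (P,R) of Σ_{e∈M} z_e / g(e) (so x > 0). Then every valid schedule for (P,R,g) has heat at least 1/x. -/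
open scoped ENNReal BigOperators

namespace PolySched

variable {V : Type*}

/-- An inclusion-maximal matching (as a finite set of edges). -/
def MaximalMatchingIn {V : Type*} (G : SimpleGraph V) (M : Finset (Sym2 V)) : Prop :=
  IsMatchingIn G ↑M ∧
    ∀ M' : Finset (Sym2 V), IsMatchingIn G ↑M' → M ⊆ M' → M' = M

/-- Any matching extends to an inclusion-maximal matching. -/
lemma exists_maximal_superset {V : Type*} [Fintype V] [DecidableEq V]
    (G : SimpleGraph V) (M : Set (Sym2 V)) (hM : IsMatchingIn G M) :
    ∃ N : Finset (Sym2 V), MaximalMatchingIn G N ∧ M ⊆ ↑N := by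
  classical
  set 𝒮 : Finset (Finset (Sym2 V)) :=
    Finset.univ.filter (fun N => IsMatchingIn G ↑N ∧ M ⊆ ↑N) with h𝒮def
  have hmem : ∀ N, N ∈ 𝒮 ↔ IsMatchingIn G ↑N ∧ M ⊆ ↑N := by
    intro N; simp [h𝒮def]
  have h𝒮 : 𝒮.Nonempty := by
    refine ⟨M.toFinset, (hmem _).2 ?_⟩
    rw [Set.coe_toFinset]
    exact ⟨hM, subset_rfl⟩
  obtain ⟨N, hN, hmax⟩ := 𝒮.exists_max_image Finset.card h𝒮
  rw [hmem] at hN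
  refine ⟨N, ⟨hN.1, ?_⟩, hN.2⟩
  intro N' hN' hsub
  have hcard : N'.card ≤ N.card :=
    hmax N' ((hmem _).2 ⟨hN', hN.2.trans (Finset.coe_subset.2 hsub)⟩)
  exact (Finset.eq_of_subset_of_card_le hsub hcard).symm

/-- If every window of `n` consecutive days contains `e`, then in the first
`K * n` days `e` occurs at least `K` times. -/
lemma count_windows {V : Type*} (S : ℕ → Set (Sym2 V)) (e : Sym2 V)
    [DecidablePred fun t : ℕ => e ∈ S t] (n : ℕ)
    (hwin : ∀ t, ∃ i < n, e ∈ S (t + i)) (K : ℕ) :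
    K ≤ ((Finset.range (K * n)).filter (fun t => e ∈ S t)).card := by
  classical
  choose i hi he using fun j : ℕ => hwin (j * n)
  have hn : 0 < n := lt_of_le_of_lt (Nat.zero_le _) (hi 0)
  have hcard := Finset.card_le_card_of_injOn (fun j => j * n + i j)
    (s := Finset.range K)
    (t := (Finset.range (K * n)).filter (fun t => e ∈ S t)) ?_ ?_
  · simpa using hcard
  · intro j hj
    rw [Finset.mem_coe, Finset.mem_range] at hj
    rw [Finset.mem_coe, Finset.mem_filter, Finset.mem_range]
    refine ⟨?_, he j⟩
    have h1 : j * n + i j < (j + 1) * n := by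
      rw [add_mul, one_mul]; exact Nat.add_lt_add_left (hi j) _
    exact lt_of_lt_of_le h1 (Nat.mul_le_mul_right n hj)
  · intro a _ b _ hab
    simp only at hab
    have h1 : a + i a / n = b + i b / n := by
      rw [← Nat.mul_add_div hn, ← Nat.mul_add_div hn, mul_comm n a, mul_comm n b, hab]
    rwa [Nat.div_eq_of_lt (hi a), Nat.div_eq_of_lt (hi b), add_zero, add_zero] at h1

/-- Fractional lower bound (Theorem "Fractional lower bound").
For any convex weights z on the edges, with x the maximum over inclusion-maximal
matchings M of Σ_{e∈M} z_e/g_e, every valid schedule has heat at least 1/x. -/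
theorem fractional_lower_bound {V : Type*} [Fintype V] [DecidableEq V]
    (G : SimpleGraph V) [DecidableRel G.Adj]
    (g : Sym2 V → ℝ) (hg : ∀ e ∈ G.edgeSet, 0 < g e)
    (hne : G.edgeFinset.Nonempty)
    (z : Sym2 V → ℝ) (hz : ∀ e ∈ G.edgeSet, z e ∈ Set.Icc (0 : ℝ) 1)
    (hzsum : ∑ e ∈ G.edgeFinset, z e = 1)
    (x : ℝ)
    (hx : IsGreatest {s : ℝ | ∃ M : Finset (Sym2 V),
        MaximalMatchingIn G M ∧ s = ∑ e ∈ M, z e / g e} x)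
    (S : ℕ → Set (Sym2 V)) (hS : OPSValid G S) :
    ENNReal.ofReal (1 / x) ≤ heat G g S := by
  classical
  set H := heat G g S with hHdef
  rcases eq_or_ne H ⊤ with hH | hH
  · rw [hH]; exact le_top
  obtain ⟨e₀, he₀⟩ := hne
  have he₀' : e₀ ∈ G.edgeSet := SimpleGraph.mem_edgeFinset.mp he₀
  -- x is positive
  have hzpos : ∃ e ∈ G.edgeFinset, 0 < z e := by
    by_contra hcon
    push_neg at hcon
    have : (∑ e ∈ G.edgeFinset, z e) ≤ 0 := Finset.sum_nonpos hcon
    linarith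
  have hxpos : 0 < x := by
    obtain ⟨e₁, he₁, hz₁⟩ := hzpos
    have he₁' : e₁ ∈ G.edgeSet := SimpleGraph.mem_edgeFinset.mp he₁
    have hm : IsMatchingIn G {e₁} :=
      ⟨Set.singleton_subset_iff.2 he₁', Set.pairwise_singleton _ _⟩
    obtain ⟨N, hN, hsub⟩ := exists_maximal_superset G {e₁} hm
    have he₁N : e₁ ∈ N := by exact_mod_cast hsub (Set.mem_singleton e₁)
    have hNedge : ∀ e ∈ N, e ∈ G.edgeSet := fun e heN => hN.1.1 heN
    have hpos : 0 < ∑ e ∈ N, z e / g e := by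
      have hle := Finset.single_le_sum (f := fun e => z e / g e)
        (fun e heN => div_nonneg (hz e (hNedge e heN)).1 (hg e (hNedge e heN)).le) he₁N
      have h2 : 0 < z e₁ / g e₁ := div_pos hz₁ (hg e₁ he₁')
      linarith
    exact hpos.trans_le (hx.2 ⟨N, hN, rfl⟩)
  -- per-day bound
  have hday : ∀ t, ∑ e ∈ G.edgeFinset.filter (fun e => e ∈ S t), z e / g e ≤ x := by
    intro t
    obtain ⟨N, hN, hsub⟩ := exists_maximal_superset G (S t) (hS t)
    have hNedge : ∀ e ∈ N, e ∈ G.edgeSet := fun e heN => hN.1.1 heN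
    have hsubset : G.edgeFinset.filter (fun e => e ∈ S t) ⊆ N := by
      intro e he
      rw [Finset.mem_filter] at he
      exact_mod_cast hsub he.2
    have hle : ∑ e ∈ G.edgeFinset.filter (fun e => e ∈ S t), z e / g e
        ≤ ∑ e ∈ N, z e / g e :=
      Finset.sum_le_sum_of_subset_of_nonneg hsubset
        (fun e heN _ => div_nonneg (hz e (hNedge e heN)).1 (hg e (hNedge e heN)).le)
    exact hle.trans (hx.2 ⟨N, hN, rfl⟩)
  -- each term is below the heat
  have hterm : ∀ e ∈ G.edgeSet, ENNReal.ofReal (g e) * recTime S e ≤ H := by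
    intro e he
    exact le_iSup₂ (f := fun (e : Sym2 V) (_ : e ∈ G.edgeSet) =>
      ENNReal.ofReal (g e) * recTime S e) e he
  -- key: for each edge, a window length n with g e * n ≤ H.toReal
  have hkey : ∀ e ∈ G.edgeSet, ∃ n : ℕ, 0 < n ∧ (∀ t, ∃ i < n, e ∈ S (t + i)) ∧
      g e * n ≤ H.toReal := by
    intro e he
    have hfin : ∃ m : ℕ, ¬ ∃ t, ∀ i < m, e ∉ S (t + i) := by
      by_contra hcon
      push_neg at hcon
      have htop : recTime S e = ⊤ := by
        apply ENNReal.eq_top_of_forall_nnreal_le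
        intro r
        obtain ⟨m, hm⟩ := exists_nat_ge r
        have h1 : ((m : ℝ≥0∞) + 1) ≤ recTime S e :=
          le_iSup₂ (f := fun (d : ℕ) (_ : d ∈ {d : ℕ | ∃ t : ℕ, ∀ i < d, e ∉ S (t + i)}) =>
            ((d : ℝ≥0∞) + 1)) m (hcon m)
        calc (r : ℝ≥0∞) ≤ (m : ℝ≥0∞) := by exact_mod_cast hm
          _ ≤ (m : ℝ≥0∞) + 1 := le_self_add
          _ ≤ recTime S e := h1
      have : ENNReal.ofReal (g e) * recTime S e = ⊤ := by
        rw [htop, ENNReal.mul_top (ne_of_gt (ENNReal.ofReal_pos.2 (hg e he)))]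
      exact hH (top_le_iff.mp (this ▸ hterm e he))
    obtain ⟨n, hnot, hminn⟩ : ∃ n : ℕ, (¬∃ t, ∀ i < n, e ∉ S (t + i)) ∧
        ∀ m, m < n → ∃ t, ∀ i < m, e ∉ S (t + i) :=
      ⟨Nat.find hfin, Nat.find_spec hfin, fun m hm => not_not.mp (Nat.find_min hfin hm)⟩
    push_neg at hnot
    have hspec : ∀ t, ∃ i < n, e ∈ S (t + i) := hnot
    have hn0 : 0 < n := by
      rcases Nat.eq_zero_or_pos n with h0 | h0
      · exfalso
        obtain ⟨i, hi, _⟩ := hspec 0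
        omega
      · exact h0
    have hmem : ∃ t, ∀ i < n - 1, e ∉ S (t + i) := hminn (n - 1) (by omega)
    refine ⟨n, hn0, hspec, ?_⟩
    have hrec : ((n - 1 : ℕ) : ℝ≥0∞) + 1 ≤ recTime S e :=
      le_iSup₂ (f := fun (d : ℕ) (_ : d ∈ {d : ℕ | ∃ t : ℕ, ∀ i < d, e ∉ S (t + i)}) =>
        ((d : ℝ≥0∞) + 1)) (n - 1) hmem
    have hcast : ((n - 1 : ℕ) : ℝ≥0∞) + 1 = (n : ℝ≥0∞) := by
      have : (n - 1) + 1 = n := by omega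
      exact_mod_cast congrArg (Nat.cast : ℕ → ℝ≥0∞) this
    rw [hcast] at hrec
    have hmul : ENNReal.ofReal (g e * n) ≤ H := by
      rw [ENNReal.ofReal_mul (hg e he).le, ENNReal.ofReal_natCast]
      calc ENNReal.ofReal (g e) * (n : ℝ≥0∞) ≤ ENNReal.ofReal (g e) * recTime S e :=
        mul_le_mul_right hrec _
        _ ≤ H := hterm e he
    exact (ENNReal.ofReal_le_iff_le_toReal hH).mp hmul
  choose! n hn1 hn2 hn3 using hkey
  set h := H.toReal with hhdef
  have hh0 : 0 < h := by
    have h1 := hn3 e₀ he₀'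
    have h2 : 0 < g e₀ * (n e₀ : ℝ) := by
      have h3 : (0:ℝ) < (n e₀ : ℝ) := by exact_mod_cast hn1 e₀ he₀'
      exact mul_pos (hg e₀ he₀') h3
    linarith
  set C := ∑ e ∈ G.edgeFinset, z e / g e with hCdef
  -- count lower bound
  have hcount : ∀ (T : ℕ), ∀ e ∈ G.edgeFinset,
      ((T : ℝ) / (n e) - 1) ≤ (((Finset.range T).filter (fun t => e ∈ S t)).card : ℝ) := by
    intro T e he
    have he' : e ∈ G.edgeSet := SimpleGraph.mem_edgeFinset.mp he
    have h1 : (T / n e) ≤ ((Finset.range ((T / n e) * n e)).filter (fun t => e ∈ S t)).card :=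
      count_windows S e (n e) (hn2 e he') (T / n e)
    have h2 : (T / n e) * n e ≤ T := Nat.div_mul_le_self T (n e)
    have h3 : ((Finset.range ((T / n e) * n e)).filter (fun t => e ∈ S t)).card
        ≤ ((Finset.range T).filter (fun t => e ∈ S t)).card :=
      Finset.card_le_card (Finset.filter_subset_filter _ (Finset.range_subset_range.2 h2))
    have hnpos : (0 : ℝ) < (n e : ℝ) := by exact_mod_cast hn1 e he'
    have hdm := Nat.div_add_mod T (n e)
    have hmod : T % n e < n e := Nat.mod_lt T (hn1 e he')
    have h4 : (T : ℝ) / (n e) - 1 ≤ ((T / n e : ℕ) : ℝ) := by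
      have hdm' : ((n e : ℝ)) * ((T / n e : ℕ) : ℝ) + ((T % n e : ℕ) : ℝ) = (T : ℝ) := by
        exact_mod_cast hdm
      have hmod' : ((T % n e : ℕ) : ℝ) < (n e : ℝ) := by exact_mod_cast hmod
      rw [sub_le_iff_le_add, div_le_iff₀ hnpos]
      nlinarith
    calc (T : ℝ) / (n e) - 1 ≤ ((T / n e : ℕ) : ℝ) := h4
      _ ≤ (((Finset.range ((T / n e) * n e)).filter (fun t => e ∈ S t)).card : ℝ) := by
          exact_mod_cast h1
      _ ≤ _ := by exact_mod_cast h3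
  -- double counting
  have hswap : ∀ T : ℕ,
      ∑ e ∈ G.edgeFinset, (z e / g e) * (((Finset.range T).filter (fun t => e ∈ S t)).card : ℝ)
      = ∑ t ∈ Finset.range T, ∑ e ∈ G.edgeFinset.filter (fun e => e ∈ S t), z e / g e := by
    intro T
    have : ∀ e ∈ G.edgeFinset,
        (z e / g e) * (((Finset.range T).filter (fun t => e ∈ S t)).card : ℝ)
        = ∑ t ∈ Finset.range T, (if e ∈ S t then z e / g e else 0) := by
      intro e _
      rw [Finset.card_filter]
      push_cast
      rw [Finset.mul_sum]
      refine Finset.sum_congr rfl fun t _ => ?_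
      split <;> simp
    rw [Finset.sum_congr rfl this, Finset.sum_comm]
    refine Finset.sum_congr rfl fun t _ => ?_
    rw [Finset.sum_filter]
  have hmain : ∀ T : ℕ, (T : ℝ) / h - C ≤ (T : ℝ) * x := by
    intro T
    have hedge : ∀ e ∈ G.edgeFinset, z e * T / h - z e / g e
        ≤ (z e / g e) * (((Finset.range T).filter (fun t => e ∈ S t)).card : ℝ) := by
      intro e he
      have he' : e ∈ G.edgeSet := SimpleGraph.mem_edgeFinset.mp he
      have hzg : 0 ≤ z e / g e := div_nonneg (hz e he').1 (hg e he').le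
      have hgn : 0 < g e * (n e : ℝ) := by
        have h2 : (0:ℝ) < (n e : ℝ) := by exact_mod_cast hn1 e he'
        exact mul_pos (hg e he') h2
      have hstep : z e * T / h ≤ (z e / g e) * ((T : ℝ) / (n e)) := by
        rw [div_mul_div_comm]
        exact div_le_div_of_nonneg_left
          (mul_nonneg (hz e he').1 (Nat.cast_nonneg _)) hgn (hn3 e he')
      have h2 := mul_le_mul_of_nonneg_left (hcount T e he) hzg
      have hexp : (z e / g e) * ((T : ℝ) / (n e) - 1)
          = (z e / g e) * ((T : ℝ) / (n e)) - z e / g e := by ring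
      linarith [hstep, h2, hexp]
    have hsum : ∑ e ∈ G.edgeFinset, (z e * T / h - z e / g e) = (T : ℝ) / h - C := by
      rw [Finset.sum_sub_distrib, ← hCdef]
      congr 1
      rw [← Finset.sum_div, ← Finset.sum_mul, hzsum, one_mul]
    calc (T : ℝ) / h - C = ∑ e ∈ G.edgeFinset, (z e * T / h - z e / g e) := hsum.symm
      _ ≤ ∑ e ∈ G.edgeFinset,
          (z e / g e) * (((Finset.range T).filter (fun t => e ∈ S t)).card : ℝ) :=
        Finset.sum_le_sum hedge
      _ = ∑ t ∈ Finset.range T, ∑ e ∈ G.edgeFinset.filter (fun e => e ∈ S t), z e / g e :=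
        hswap T
      _ ≤ ∑ t ∈ Finset.range T, x := Finset.sum_le_sum fun t _ => hday t
      _ = (T : ℝ) * x := by rw [Finset.sum_const, Finset.card_range, nsmul_eq_mul]
  have hC0 : 0 ≤ C := by
    apply Finset.sum_nonneg
    intro e he
    have he' : e ∈ G.edgeSet := SimpleGraph.mem_edgeFinset.mp he
    exact div_nonneg (hz e he').1 (hg e he').le
  have hxh : 1 / h ≤ x := by
    by_contra hc
    push_neg at hc
    have hpos : 0 < 1 / h - x := by linarith
    obtain ⟨T, hT⟩ := exists_nat_gt (C / (1 / h - x))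
    rw [div_lt_iff₀ hpos] at hT
    have h5 := hmain T
    have hexp : (T : ℝ) / h = (T : ℝ) * (1 / h) := by ring
    have hexp2 : (T : ℝ) * (1 / h - x) = (T : ℝ) * (1 / h) - (T : ℝ) * x := by ring
    linarith
  have h1x : 1 / x ≤ h := by
    have hhx : 1 ≤ h * x := by
      have h6 := mul_le_mul_of_nonneg_left hxh hh0.le
      rwa [mul_one_div_cancel hh0.ne'] at h6
    rw [div_le_iff₀ hxpos]
    linarith
  calc ENNReal.ofReal (1 / x) ≤ ENNReal.ofReal h := ENNReal.ofReal_le_ofReal h1x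
    _ = H := ENNReal.ofReal_toReal hH

end PolySched
end

section
/- Let (P,R,g) be an OPS instance and let p ∈ P be any vertex. Let G_p = Σ over edges e ∈ R incident to p of g(e). Then every valid schedule for (P,R,g) has heat at least G_p. -/
open scoped ENNReal BigOperators

namespace PolySched

variable {V : Type*}

open Classical in
lemma count_blocks (S : ℕ → Set (Sym2 V)) (e : Sym2 V) (r k : ℕ)
    (hw : ∀ t, ∃ i < r, e ∈ S (t + i)) :
    k ≤ ((Finset.range (k * r)).filter (fun t => e ∈ S t)).card := by
  classical
  choose i hi he using hw
  have hr : 0 < r := lt_of_le_of_lt (Nat.zero_le _) (hi 0)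
  have : (Finset.range k).card ≤ ((Finset.range (k * r)).filter (fun t => e ∈ S t)).card := by
    apply Finset.card_le_card_of_injOn (fun j => j * r + i (j * r))
    · intro j hj
      simp only [Finset.mem_coe, Finset.mem_range] at hj
      simp only [Finset.mem_coe, Finset.mem_filter, Finset.mem_range]
      refine ⟨?_, he _⟩
      calc j * r + i (j * r) < j * r + r := Nat.add_lt_add_left (hi _) _
        _ = (j + 1) * r := by ring
        _ ≤ k * r := Nat.mul_le_mul_right _ hj
    · intro a _ b _ hab
      have key : ∀ j : ℕ, (j * r + i (j * r)) / r = j := fun j => by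
        rw [Nat.mul_comm j r, Nat.mul_add_div hr, Nat.div_eq_of_lt (hi _), Nat.add_zero]
      have := congrArg (· / r) hab
      simpa [key] using this
  simpa using this


/-- Bamboo lower bound (Corollary "Bamboo lower bound").
For any person p, every valid schedule has heat at least the sum G_p of the
growth rates of the edges incident to p. -/
theorem bamboo_lower_bound {V : Type*} [Fintype V] [DecidableEq V]
    (G : SimpleGraph V) [DecidableRel G.Adj]
    (g : Sym2 V → ℝ) (hg : ∀ e ∈ G.edgeSet, 0 < g e)
    (p : V)
    (S : ℕ → Set (Sym2 V)) (hS : OPSValid G S) :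
    ENNReal.ofReal (∑ e ∈ G.incidenceFinset p, g e) ≤ heat G g S := by
  classical
  by_cases htop : heat G g S = ⊤
  · rw [htop]; exact le_top
  set H := heat G g S with hHdef
  set I := G.incidenceFinset p with hIdef
  have hpe : ∀ e ∈ I, e ∈ G.edgeSet ∧ p ∈ e := by
    intro e he
    rw [hIdef, SimpleGraph.mem_incidenceFinset] at he
    exact he
  have key : ∀ e ∈ I, ∃ r : ℕ, 0 < r ∧ (∀ t, ∃ i < r, e ∈ S (t + i)) ∧
      g e * r ≤ H.toReal := by
    intro e heI
    have heE : e ∈ G.edgeSet := (hpe e heI).1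
    have hge : 0 < g e := hg e heE
    have hle : ENNReal.ofReal (g e) * recTime S e ≤ H :=
      le_iSup₂ (f := fun e (_ : e ∈ G.edgeSet) => ENNReal.ofReal (g e) * recTime S e) e heE
    have hfin : recTime S e ≠ ⊤ := by
      intro h
      rw [h, ENNReal.mul_top (by simp [ENNReal.ofReal_eq_zero]; linarith)] at hle
      exact htop (top_le_iff.mp hle)
    have hA0 : (0:ℕ) ∈ {d : ℕ | ∃ t : ℕ, ∀ i < d, e ∉ S (t + i)} :=
      ⟨0, fun i hi => absurd hi (Nat.not_lt_zero i)⟩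
    have hmem : ∀ d ∈ {d : ℕ | ∃ t : ℕ, ∀ i < d, e ∉ S (t + i)},
        ((d : ℝ≥0∞) + 1) ≤ recTime S e := fun d hd =>
      le_iSup₂ (f := fun d (_ : d ∈ {d : ℕ | ∃ t : ℕ, ∀ i < d, e ∉ S (t + i)}) =>
        ((d : ℝ≥0∞) + 1)) d hd
    have hbdd : BddAbove {d : ℕ | ∃ t : ℕ, ∀ i < d, e ∉ S (t + i)} := by
      refine ⟨⌈(recTime S e).toReal⌉₊, fun d hd => ?_⟩
      have h1 : (d : ℝ≥0∞) ≤ recTime S e := le_trans (by simp) (hmem d hd)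
      have h2 : (d : ℝ) ≤ (recTime S e).toReal := by
        have := ENNReal.toReal_mono hfin h1
        simpa using this
      have h3 : (d : ℝ) ≤ (⌈(recTime S e).toReal⌉₊ : ℝ) :=
        le_trans h2 (Nat.le_ceil _)
      exact_mod_cast h3
    set A : Set ℕ := {d : ℕ | ∃ t : ℕ, ∀ i < d, e ∉ S (t + i)} with hA
    have h0A : 0 ∈ A := hA0
    have hD : sSup A ∈ A := Nat.sSup_mem ⟨0, h0A⟩ hbdd
    refine ⟨sSup A + 1, Nat.succ_pos _, ?_, ?_⟩
    · intro t
      by_contra hcon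
      push_neg at hcon
      have hmem2 : sSup A + 1 ∈ A := ⟨t, hcon⟩
      have := le_csSup hbdd hmem2
      omega
    · have h2 : (((sSup A : ℕ) : ℝ≥0∞) + 1) ≤ recTime S e := hmem _ hD
      have h3 : ENNReal.ofReal (g e) * (((sSup A : ℕ) : ℝ≥0∞) + 1) ≤ H :=
        le_trans (mul_le_mul_right h2 _) hle
      have h4 := ENNReal.toReal_mono htop h3
      rw [ENNReal.toReal_mul, ENNReal.toReal_ofReal hge.le] at h4
      have h5 : ((((sSup A : ℕ) : ℝ≥0∞) + 1)).toReal = ((sSup A + 1 : ℕ) : ℝ) := by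
        rw [ENNReal.toReal_add (by simp) (by simp), ENNReal.toReal_natCast, ENNReal.toReal_one]
        push_cast
        ring
      rw [h5] at h4
      exact h4
  have key' : ∀ e : Sym2 V, ∃ r : ℕ, 0 < r ∧
      (e ∈ I → ((∀ t, ∃ i < r, e ∈ S (t + i)) ∧ g e * r ≤ H.toReal)) := by
    intro e
    by_cases h : e ∈ I
    · obtain ⟨r, h1, h2, h3⟩ := key e h; exact ⟨r, h1, fun _ => ⟨h2, h3⟩⟩
    · exact ⟨1, one_pos, fun h' => absurd h' h⟩
  choose r hrpos hprop using key'
  set N := ∏ e ∈ I, r e with hNdef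
  have hN : 0 < N := Finset.prod_pos fun e _ => hrpos e
  have hdvd : ∀ e ∈ I, r e ∣ N := fun e he => Finset.dvd_prod_of_mem r he
  have hcount : ∑ e ∈ I, N / r e ≤ N := by
    have hdisj : ∀ x ∈ I, ∀ y ∈ I, x ≠ y →
        Disjoint ((Finset.range N).filter (fun t => x ∈ S t))
          ((Finset.range N).filter (fun t => y ∈ S t)) := by
      intro x hx y hy hxy
      rw [Finset.disjoint_left]
      intro t ht ht'
      simp only [Finset.mem_filter] at ht ht'
      have hm := (hS t).2 ht.2 ht'.2 hxy
      exact hm p (hpe x hx).2 (hpe y hy).2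
    calc ∑ e ∈ I, N / r e
        ≤ ∑ e ∈ I, ((Finset.range N).filter (fun t => e ∈ S t)).card := by
          apply Finset.sum_le_sum
          intro e he
          have hcb := count_blocks S e (r e) (N / r e) ((hprop e he).1)
          rwa [Nat.div_mul_cancel (hdvd e he)] at hcb
      _ = (I.biUnion (fun e => (Finset.range N).filter (fun t => e ∈ S t))).card :=
          (Finset.card_biUnion hdisj).symm
      _ ≤ (Finset.range N).card := Finset.card_le_card (by
          intro t ht
          simp only [Finset.mem_biUnion, Finset.mem_filter] at ht
          obtain ⟨e, _, ht, _⟩ := ht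
          exact ht)
      _ = N := by simp
  have hNpos : (0 : ℝ) < N := by exact_mod_cast hN
  have hsum : ∑ e ∈ I, g e ≤ H.toReal := by
    have step : ∀ e ∈ I, g e ≤ H.toReal * ((N / r e : ℕ) : ℝ) / N := by
      intro e he
      obtain ⟨hw, hb⟩ := hprop e he
      have hk : ((N / r e : ℕ) : ℝ) * (r e : ℝ) = N := by
        exact_mod_cast Nat.div_mul_cancel (hdvd e he)
      rw [le_div_iff₀ hNpos]
      calc g e * N = (g e * r e) * ((N / r e : ℕ) : ℝ) := by rw [← hk]; ring
        _ ≤ H.toReal * ((N / r e : ℕ) : ℝ) :=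
            mul_le_mul_of_nonneg_right hb (by positivity)
    calc ∑ e ∈ I, g e ≤ ∑ e ∈ I, H.toReal * ((N / r e : ℕ) : ℝ) / N :=
          Finset.sum_le_sum step
      _ = H.toReal / N * ∑ e ∈ I, ((N / r e : ℕ) : ℝ) := by
          rw [Finset.mul_sum]; apply Finset.sum_congr rfl; intro e _; ring
      _ ≤ H.toReal / N * N := by
          apply mul_le_mul_of_nonneg_left _ (by positivity)
          exact_mod_cast hcount
      _ = H.toReal := by field_simp
  calc ENNReal.ofReal (∑ e ∈ I, g e) ≤ ENNReal.ofReal H.toReal :=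
        ENNReal.ofReal_le_ofReal hsum
    _ = H := ENNReal.ofReal_toReal htop


end PolySched
end

section
/- Let (P,R,g) be an OPS instance with R nonempty and let S be a valid schedule with finite heat h = h(S). Then for every ε > 0 there exist finitely many matchings M_1, …, M_N of the graph (P,R) and nonnegative reals y_1, …, y_N with y_1 + ⋯ + y_N ≤ 1 such that for every edge e ∈ R: g(e) ≤ (h + ε) · Σ_{j : e ∈ M_j} y_j. (In other words, the optimal fractional heat of the instance is at most its optimal integral heat.) -/
open scoped ENNReal BigOperators

namespace PolySched

variable {V : Type*}

/-- The optimal fractional heat is at most the integral heat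
(Lemma "Fractional lower bound", fractional feasibility direction).
Given a valid schedule of finite heat h, for every ε > 0 there are finitely
many matchings with nonnegative weights summing to at most 1 such that each
edge e satisfies g(e) ≤ (h+ε)·(total weight of matchings containing e). -/
theorem fractional_at_most_integral {V : Type*} [Fintype V] [DecidableEq V]
    (G : SimpleGraph V) [DecidableRel G.Adj]
    (g : Sym2 V → ℝ) (hg : ∀ e ∈ G.edgeSet, 0 < g e)
    (hne : G.edgeSet.Nonempty)
    (S : ℕ → Set (Sym2 V)) (hS : OPSValid G S)
    (h : ℝ) (h0 : 0 ≤ h) (hheat : heat G g S = ENNReal.ofReal h)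
    (ε : ℝ) (hε : 0 < ε) :
    ∃ (N : ℕ) (M : Fin N → Finset (Sym2 V)) (y : Fin N → ℝ),
      (∀ j, IsMatchingIn G ↑(M j)) ∧
      (∀ j, 0 ≤ y j) ∧
      (∑ j, y j ≤ 1) ∧
      ∀ e ∈ G.edgeSet,
        g e ≤ (h + ε) * ∑ j ∈ Finset.univ.filter (fun j => e ∈ M j), y j := by

  classical
  -- Step 1: key consequence of finite heat
  have hA : ∀ e ∈ G.edgeSet, ∀ d : ℕ, (∃ t : ℕ, ∀ i < d, e ∉ S (t + i)) →
      g e * (d + 1) ≤ h := by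
    intro e he d hd
    have hge : 0 < g e := hg e he
    have h1 : ((d : ℝ≥0∞) + 1) ≤ recTime S e :=
      le_iSup₂ (f := fun d : ℕ => fun _ : d ∈ {d : ℕ | ∃ t : ℕ, ∀ i < d, e ∉ S (t + i)} =>
        ((d : ℝ≥0∞) + 1)) d hd
    have h2 : ENNReal.ofReal (g e) * recTime S e ≤ ENNReal.ofReal h := by
      rw [← hheat]
      exact le_iSup₂ (f := fun e : Sym2 V => fun _ : e ∈ G.edgeSet =>
        ENNReal.ofReal (g e) * recTime S e) e he
    have h3 : ENNReal.ofReal (g e) * ((d : ℝ≥0∞) + 1) ≤ ENNReal.ofReal h :=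
      le_trans (mul_le_mul_right h1 _) h2
    have h4 : ENNReal.ofReal (g e * (d + 1)) ≤ ENNReal.ofReal h := by
      rw [ENNReal.ofReal_mul hge.le]
      convert h3 using 2
      rw [ENNReal.ofReal_add (by positivity) zero_le_one, ENNReal.ofReal_natCast,
        ENNReal.ofReal_one]
    rw [ENNReal.ofReal_le_ofReal_iff h0] at h4
    exact h4
  -- per-edge data
  have hgeh : ∀ e ∈ G.edgeSet, g e ≤ h := by
    intro e he
    have := hA e he 0 ⟨0, fun i hi => absurd hi (Nat.not_lt_zero i)⟩
    simpa using this
  have hC : ∀ e ∈ G.edgeSet, ∀ t : ℕ, ∃ i < ⌊h / g e⌋₊, e ∈ S (t + i) := by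
    intro e he t
    by_contra hcon
    push_neg at hcon
    have h1 := hA e he ⌊h / g e⌋₊ ⟨t, hcon⟩
    have hge : 0 < g e := hg e he
    have h2 : h / g e < (⌊h / g e⌋₊ : ℝ) + 1 := Nat.lt_floor_add_one _
    rw [div_lt_iff₀ hge] at h2
    nlinarith
  -- global parameters
  set D : ℕ := G.edgeFinset.sup (fun e => ⌊h / g e⌋₊) with hD
  set T : ℕ := ⌈(h + ε) * D / ε⌉₊ + 1 with hT
  have hT0 : 0 < T := Nat.succ_pos _
  have hT0' : (0 : ℝ) < T := by exact_mod_cast hT0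
  have hTbig : ∀ e ∈ G.edgeSet, (h + ε) * (⌊h / g e⌋₊ : ℝ) ≤ ε * T := by
    intro e he
    have hdD : ⌊h / g e⌋₊ ≤ D := Finset.le_sup (f := fun e => ⌊h / g e⌋₊) (SimpleGraph.mem_edgeFinset.mpr he)
    have h1 : (h + ε) * (⌊h / g e⌋₊ : ℝ) ≤ (h + ε) * D := by
      apply mul_le_mul_of_nonneg_left (by exact_mod_cast hdD) (by linarith)
    have h2 : (h + ε) * D / ε ≤ (⌈(h + ε) * D / ε⌉₊ : ℝ) := Nat.le_ceil _
    have h3 : (h + ε) * D ≤ ε * ⌈(h + ε) * D / ε⌉₊ := by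
      rw [div_le_iff₀ hε] at h2
      linarith
    have h4 : (ε : ℝ) * ⌈(h + ε) * D / ε⌉₊ ≤ ε * T := by
      apply mul_le_mul_of_nonneg_left _ hε.le
      exact_mod_cast Nat.le_succ _
    linarith
  refine ⟨T, fun j => (Set.toFinite (S j.val)).toFinset, fun _ => 1 / T, ?_, ?_, ?_, ?_⟩
  · intro j
    rw [Set.Finite.coe_toFinset]
    exact hS j.val
  · intro j
    positivity
  · rw [Finset.sum_const, Finset.card_univ, Fintype.card_fin, nsmul_eq_mul]
    rw [mul_one_div, div_self (ne_of_gt hT0')]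
  · intro e he
    have hge : 0 < g e := hg e he
    set d : ℕ := ⌊h / g e⌋₊ with hdd
    have hd1 : 1 ≤ d := by
      apply Nat.le_floor
      rw [Nat.cast_one, le_div_iff₀ hge]
      have := hgeh e he
      linarith
    have hd0 : (0 : ℝ) < d := by exact_mod_cast hd1
    have hdh : (d : ℝ) * g e ≤ h := by
      have h1 : (d : ℝ) ≤ h / g e := Nat.floor_le (by positivity)
      rw [le_div_iff₀ hge] at h1
      exact h1
    -- occurrence times
    have hCe := hC e he
    set c : ℕ := T / d with hcc
    -- injection from range c into the occurrence filter
    have hcard : c ≤ (Finset.univ.filter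
        (fun j : Fin T => e ∈ (Set.toFinite (S j.val)).toFinset)).card := by
      have key : ∀ k : ℕ, ∃ t : ℕ, t / d = k ∧ e ∈ S t := by
        intro k
        obtain ⟨i, hi, hmem⟩ := hCe (k * d)
        refine ⟨k * d + i, ?_, hmem⟩
        rw [add_comm, Nat.add_mul_div_right _ _ (by omega : 0 < d),
          Nat.div_eq_of_lt hi, zero_add]
      choose tt htd htm using key
      have htlt : ∀ k < c, tt k < T := by
        intro k hk
        have h1 : tt k < (k + 1) * d := by
          have hm := Nat.div_add_mod (tt k) d
          have hm2 : tt k % d < d := Nat.mod_lt _ (by omega)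
          rw [htd k] at hm
          have hr : (k + 1) * d = d * k + d := by ring
          omega
        have h2 : (k + 1) * d ≤ c * d := Nat.mul_le_mul_right d hk
        have h3 : c * d ≤ T := Nat.div_mul_le_self T d
        omega
      have := Finset.card_le_card_of_injOn
        (f := fun k : ℕ => (⟨tt k % T, Nat.mod_lt _ hT0⟩ : Fin T))
        (s := Finset.range c)
        (t := Finset.univ.filter
          (fun j : Fin T => e ∈ (Set.toFinite (S j.val)).toFinset)) ?_ ?_
      · simpa using this
      · intro k hk
        rw [Finset.mem_coe, Finset.mem_range] at hk
        simp only [Finset.mem_coe, Finset.mem_filter, Finset.mem_univ, true_and,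
          Set.Finite.mem_toFinset]
        rw [Nat.mod_eq_of_lt (htlt k hk)]
        exact htm k
      · intro k1 hk1 k2 hk2 heq
        simp only [Finset.coe_range, Set.mem_Iio] at hk1 hk2
        have h1 : tt k1 % T = tt k2 % T := congrArg Fin.val heq
        rw [Nat.mod_eq_of_lt (htlt k1 hk1), Nat.mod_eq_of_lt (htlt k2 hk2)] at h1
        rw [← htd k1, ← htd k2, h1]
    -- arithmetic conclusion
    rw [Finset.sum_const, nsmul_eq_mul]
    set K : ℕ := (Finset.univ.filter
        (fun j : Fin T => e ∈ (Set.toFinite (S j.val)).toFinset)).card with hK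
    have hcK : (c : ℝ) ≤ K := by exact_mod_cast hcard
    have hcd : (T : ℝ) - d < c * d := by
      have h1 : T % d < d := Nat.mod_lt _ (by omega)
      have h2 : c * d + T % d = T := by
        rw [hcc, Nat.mul_comm]
        exact Nat.div_add_mod T d
      have h2' : (c : ℝ) * d + (T % d : ℕ) = T := by exact_mod_cast h2
      have h1' : ((T % d : ℕ) : ℝ) < d := by exact_mod_cast h1
      linarith
    have hεT := hTbig e he
    rw [← hdd] at hεT
    have hmain : g e * T ≤ (h + ε) * c := by
      have hstep : (h + ε) * (c * d) ≥ (h + ε) * ((T : ℝ) - d) :=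
        mul_le_mul_of_nonneg_left hcd.le (by linarith)
      nlinarith [mul_le_mul_of_nonneg_right hdh hT0'.le]
    have hKT : (h + ε) * c ≤ (h + ε) * (K * (1 / T)) * T := by
      rw [mul_one_div]
      rw [mul_comm ((h+ε) * (K / T)) (T : ℝ), ← mul_assoc, mul_comm (T:ℝ) (h+ε), mul_assoc,
        mul_div_cancel₀ _ (ne_of_gt hT0')]
      exact mul_le_mul_of_nonneg_left hcK (by linarith)
    have := le_trans hmain hKT
    calc g e = g e * T / T := by field_simp
    _ ≤ (h + ε) * (K * (1 / T)) := by
        rw [div_le_iff₀ hT0']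
        exact le_trans hmain (by linarith [hKT])


end PolySched
end

section
/- Let (P,R,f) be a DPS instance on a finite simple graph. Then (P,R,f) admits a valid schedule if and only if it admits a valid periodic schedule, i.e., a valid schedule S for which there exists T ≥ 1 with S(t+T) = S(t) for all t ∈ ℕ. -/
open scoped ENNReal BigOperators

namespace PolySched

variable {V : Type*}

/-
A valid schedule uses only finitely many day-sets, so by pigeonhole some block of `n` consecutive
days (with `n` bounding every frequency) recurs later, say at days `a` and `a + T`. Repeating the
days `a, …, a + T - 1` forever gives a periodic schedule: any window of length at most `n` in it is
a window of the original schedule starting in `[a, a + T)`, because the periodic copy agrees with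
the original on `[a, a + T + n)`.
-/

theorem exists_block_recurrence {α : Type*} [Finite α] (S : ℕ → α) (n : ℕ) :
    ∃ a T, 0 < T ∧ ∀ k < n, S (a + (T + k)) = S (a + k) := by
  obtain ⟨x, y, hxy, hwin⟩ :=
    Finite.exists_ne_map_eq_of_infinite fun t (k : Fin n) => S (t + k)
  rcases hxy.lt_or_gt with h | h
  · exact ⟨x, y - x, by omega, fun k hk => by
      rw [← Nat.add_assoc, Nat.add_sub_cancel' h.le]; exact (congrFun hwin ⟨k, hk⟩).symm⟩
  · exact ⟨y, x - y, by omega, fun k hk => by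
      rw [← Nat.add_assoc, Nat.add_sub_cancel' h.le]; exact congrFun hwin ⟨k, hk⟩⟩

theorem apply_mod_eq_of_block_recurrence {α : Type*} {S : ℕ → α} {T n : ℕ}
    (hrec : ∀ k < n, S (T + k) = S k) : ∀ m < T + n, S (m % T) = S m := by
  intro m
  induction m using Nat.strong_induction_on with
  | _ m ih =>
    intro hm
    rcases lt_or_ge m T with hlt | hge
    · rw [Nat.mod_eq_of_lt hlt]
    · obtain ⟨k, rfl⟩ := Nat.exists_eq_add_of_le hge
      rw [Nat.add_mod_left, hrec k (by omega)]
      by_cases hT : T = 0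
      · subst hT; simp
      · exact ih k (by omega) (by omega)

section Periodize

variable {G : SimpleGraph V} {f : Sym2 V → ℕ} {S : ℕ → Set (Sym2 V)}

theorem DPSValid.shift (hS : DPSValid G f S) (a : ℕ) : DPSValid G f fun t => S (a + t) := by
  refine ⟨fun t => hS.1 (a + t), fun e he t => ?_⟩
  obtain ⟨i, hi, hmem⟩ := hS.2 e he (a + t)
  exact ⟨i, hi, by rwa [Nat.add_assoc] at hmem⟩

theorem DPSValid.periodize (hS : DPSValid G f S) {T n : ℕ} (hT : 0 < T)
    (hfn : ∀ e, f e ≤ n) (hrec : ∀ k < n, S (T + k) = S k) :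
    DPSValid G f fun t => S (t % T) := by
  refine ⟨fun t => hS.1 (t % T), fun e he t => ?_⟩
  obtain ⟨i, hi, hmem⟩ := hS.2 e he (t % T)
  refine ⟨i, hi, ?_⟩
  have hwindow : t % T + i < T + n := by
    have := Nat.mod_lt t hT; have := hfn e; omega
  dsimp only
  rwa [← Nat.mod_add_mod, apply_mod_eq_of_block_recurrence hrec _ hwindow]

end Periodize

theorem dps_feasible_iff_periodic_general {V : Type*} [Fintype V]
    (G : SimpleGraph V) (f : Sym2 V → ℕ) :
    (∃ S : ℕ → Set (Sym2 V), DPSValid G f S) ↔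
    (∃ S : ℕ → Set (Sym2 V), DPSValid G f S ∧
      ∃ T : ℕ, 1 ≤ T ∧ ∀ t : ℕ, S (t + T) = S t) := by
  refine ⟨fun ⟨S, hS⟩ => ?_, fun ⟨S, hS, _⟩ => ⟨S, hS⟩⟩
  obtain ⟨n, hn⟩ := Finite.bddAbove_range f
  obtain ⟨a, T, hT, hrec⟩ := exists_block_recurrence S n
  exact ⟨fun t => S (a + t % T), (hS.shift a).periodize hT (fun e => hn ⟨e, rfl⟩) hrec,
    T, hT, fun t => by simp only [Nat.add_mod_right]⟩

/-- A DPS instance on a finite graph admits a valid schedule iff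
it admits a valid periodic schedule. -/
theorem dps_feasible_iff_periodic {V : Type*} [Fintype V]
    (G : SimpleGraph V) (f : Sym2 V → ℕ) (hf : ∀ e ∈ G.edgeSet, 0 < f e) :
    (∃ S : ℕ → Set (Sym2 V), DPSValid G f S) ↔
    (∃ S : ℕ → Set (Sym2 V), DPSValid G f S ∧
      ∃ T : ℕ, 1 ≤ T ∧ ∀ t : ℕ, S (t + T) = S t) :=
  dps_feasible_iff_periodic_general G f

end PolySched
end

section
/- Let (P,R,g) be an OPS instance and let S be a valid schedule. Then there exists a valid schedule S' such that for every day t, S'(t) is an inclusion-maximal matching of (P,R) with S(t) ⊆ S'(t), and the heat satisfies h(S') ≤ h(S). Moreover, for any frequency function f : R → ℕ, if S is a valid schedule for the DPS instance (P,R,f) then so is S'. -/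
open scoped ENNReal BigOperators

namespace PolySched

variable {V : Type*}

/-! Extend each day's matching to an inclusion-maximal one by Zorn's lemma. Adding edges to a day
can only shorten the windows in which an edge is missing, so no recurrence time (hence no heat)
grows, and every occurrence required by a DPS instance is still there. -/

section Matchings

variable (G : SimpleGraph V)

theorem IsMatchingIn.sUnion_of_isChain {c : Set (Set (Sym2 V))}
    (hc : ∀ M ∈ c, IsMatchingIn G M) (hchain : IsChain (· ⊆ ·) c) :
    IsMatchingIn G (⋃₀ c) := by
  refine ⟨Set.sUnion_subset fun M hM => (hc M hM).1, ?_⟩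
  rintro e ⟨A, hA, heA⟩ e' ⟨B, hB, heB⟩ hne
  rcases hchain.total hA hB with hAB | hBA
  · exact (hc B hB).2 (hAB heA) heB hne
  · exact (hc A hA).2 heA (hBA heB) hne

theorem exists_maximal_isMatchingIn_superset {M₀ : Set (Sym2 V)} (h₀ : IsMatchingIn G M₀) :
    ∃ M, M₀ ⊆ M ∧ Maximal (IsMatchingIn G) M :=
  zorn_subset_nonempty {M | IsMatchingIn G M}
    (fun c hc hchain _ => ⟨⋃₀ c, IsMatchingIn.sUnion_of_isChain G hc hchain,
      fun _ => Set.subset_sUnion_of_mem⟩) M₀ h₀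

end Matchings

section Schedules

variable {S S' : ℕ → Set (Sym2 V)}

theorem recTime_anti (h : ∀ t, S t ⊆ S' t) (e : Sym2 V) : recTime S' e ≤ recTime S e :=
  biSup_mono fun _ ⟨t, ht⟩ => ⟨t, fun i hi he => ht i hi (h _ he)⟩

theorem heat_anti (G : SimpleGraph V) (g : Sym2 V → ℝ) (h : ∀ t, S t ⊆ S' t) :
    heat G g S' ≤ heat G g S :=
  iSup₂_mono fun e _ => mul_le_mul_right (recTime_anti h e) _

theorem DPSValid.of_subset {G : SimpleGraph V} {f : Sym2 V → ℕ} (hS : DPSValid G f S)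
    (hS' : OPSValid G S') (h : ∀ t, S t ⊆ S' t) : DPSValid G f S' :=
  ⟨hS', fun e he t =>
    let ⟨i, hi, hmem⟩ := hS.2 e he t
    ⟨i, hi, h _ hmem⟩⟩

end Schedules

theorem complete_to_maximal_matchings_general {V : Type*} (G : SimpleGraph V)
    (g : Sym2 V → ℝ)
    (S : ℕ → Set (Sym2 V)) (hS : OPSValid G S) :
    ∃ S' : ℕ → Set (Sym2 V),
      (∀ t, S t ⊆ S' t ∧ IsMatchingIn G (S' t) ∧
        ∀ M : Set (Sym2 V), IsMatchingIn G M → S' t ⊆ M → M = S' t) ∧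
      heat G g S' ≤ heat G g S ∧
      (∀ f : Sym2 V → ℕ, (∀ e ∈ G.edgeSet, 0 < f e) →
        DPSValid G f S → DPSValid G f S') := by
  choose S' hsub hmax using fun t => exists_maximal_isMatchingIn_superset G (hS t)
  refine ⟨S', fun t => ⟨hsub t, (hmax t).prop, fun M hM h => (hmax t).eq_of_superset hM h⟩,
    heat_anti G g hsub, fun f _ hDPS => hDPS.of_subset (fun t => (hmax t).prop) hsub⟩

/-- Any valid schedule can be completed to one using
inclusion-maximal matchings each day, without increasing the heat, and
preserving validity for any DPS instance. -/
theorem complete_to_maximal_matchings {V : Type*} (G : SimpleGraph V)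
    (g : Sym2 V → ℝ) (hg : ∀ e ∈ G.edgeSet, 0 < g e)
    (S : ℕ → Set (Sym2 V)) (hS : OPSValid G S) :
    ∃ S' : ℕ → Set (Sym2 V),
      (∀ t, S t ⊆ S' t ∧ IsMatchingIn G (S' t) ∧
        ∀ M : Set (Sym2 V), IsMatchingIn G M → S' t ⊆ M → M = S' t) ∧
      heat G g S' ≤ heat G g S ∧
      (∀ f : Sym2 V → ℕ, (∀ e ∈ G.edgeSet, 0 < f e) →
        DPSValid G f S → DPSValid G f S') :=
  complete_to_maximal_matchings_general G g S hS

end PolySched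
end

section
/- Consider k tasks with positive integer frequencies f_1, …, f_k satisfying Σ_{i=1}^k 1/f_i = 1 (density exactly 1). Let S be a schedule assigning at most one task to each day (S : ℕ → Option (Fin k)) such that for every task i and every day t, task i is scheduled on at least one of the days t, t+1, …, t+f_i−1. Then for every task i and every day t, task i is scheduled on exactly one of the days t, t+1, …, t+f_i−1; consequently, for each i there is a unique offset d_i with 0 ≤ d_i < f_i such that the set of days on which task i is scheduled is exactly {d_i + j·f_i : j ∈ ℕ}. -/
open scoped BigOperators

theorem window_unique_aux (k : ℕ) (f : Fin k → ℕ)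
    (hf : ∀ i, 0 < f i)
    (hdens : ∑ i, (1 : ℝ) / (f i : ℝ) = 1)
    (S : ℕ → Option (Fin k))
    (hS : ∀ (i : Fin k) (t : ℕ), ∃ j < f i, S (t + j) = some i) :
    ∀ (i : Fin k) (t : ℕ), ∃! j, j < f i ∧ S (t + j) = some i := by
  classical
  set F : ℕ := ∏ i, f i with hF
  have hdvd : ∀ i, f i ∣ F := fun i => Finset.dvd_prod_of_mem f (Finset.mem_univ i)
  have hFpos : 0 < F := Finset.prod_pos fun i _ => hf i
  have hsum : ∑ i, F / f i = F := by
    have h1 : ∀ i : Fin k, ((F / f i : ℕ) : ℝ) = (F : ℝ) * (1 / (f i : ℝ)) := by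
      intro i
      rw [Nat.cast_div (hdvd i) (by exact_mod_cast (hf i).ne'), mul_one_div]
    have h2 : ((∑ i, F / f i : ℕ) : ℝ) = (F : ℝ) := by
      rw [Nat.cast_sum, Finset.sum_congr rfl (fun i _ => h1 i), ← Finset.mul_sum, hdens,
        mul_one]
    exact_mod_cast h2
  have key : ∀ (t : ℕ) (i : Fin k) (a m : ℕ), a + m ≤ F / f i →
      m ≤ ((Finset.range F).filter
        (fun j => S (t + j) = some i ∧ a * f i ≤ j)).card := by
    intro t i a m ham
    choose w hwlt hwS using fun n : ℕ => hS i (t + n * f i)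
    have hdivF : (F / f i) * f i = F := Nat.div_mul_cancel (hdvd i)
    refine le_trans (le_of_eq (Finset.card_range m).symm)
      (Finset.card_le_card_of_injOn (fun n => (a + n) * f i + w (a + n)) ?_ ?_)
    · intro n hn
      rw [Finset.mem_coe, Finset.mem_range] at hn
      show (a + n) * f i + w (a + n) ∈ _
      rw [Finset.mem_coe, Finset.mem_filter, Finset.mem_range]
      refine ⟨?_, ?_, ?_⟩
      · have h1 : (a + n + 1) * f i = (a + n) * f i + f i := by ring
        have h2 : (a + n + 1) * f i ≤ (F / f i) * f i :=
          Nat.mul_le_mul_right _ (by omega)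
        have := hwlt (a + n)
        omega
      · have := hwS (a + n)
        rwa [add_assoc] at this
      · have : a * f i ≤ (a + n) * f i := Nat.mul_le_mul_right _ (by omega)
        omega
    · intro n1 h1 n2 h2 heq
      have heq' : (a + n1) * f i + w (a + n1) = (a + n2) * f i + w (a + n2) := heq
      have e : ∀ n : ℕ, ((a + n) * f i + w (a + n)) / f i = a + n := by
        intro n
        rw [add_comm ((a + n) * f i), Nat.add_mul_div_right _ _ (hf i),
          Nat.div_eq_of_lt (hwlt _), zero_add]
      have e1 := e n1
      rw [heq', e n2] at e1
      omega
  have hsumcard : ∀ t : ℕ,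
      ∑ i, ((Finset.range F).filter (fun j => S (t + j) = some i)).card ≤ F := by
    intro t
    rw [← Finset.card_biUnion]
    · refine le_trans (Finset.card_le_card
        (Finset.biUnion_subset.mpr fun i _ => Finset.filter_subset _ _)) (by simp)
    · intro i1 _ i2 _ hne
      rw [Function.onFun, Finset.disjoint_left]
      intro j hj1 hj2
      rw [Finset.mem_filter] at hj1 hj2
      exact hne (Option.some_injective _ (hj1.2.symm.trans hj2.2))
  intro i t
  obtain ⟨j0, hj0lt, hj0⟩ := hS i t
  refine ⟨j0, ⟨hj0lt, hj0⟩, ?_⟩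
  rintro j1 ⟨hj1lt, hj1⟩
  by_contra hne
  -- two distinct occurrences j0, j1 in the window [t, t + f i)
  have hFdiv_pos : 0 < F / f i := Nat.div_pos (Nat.le_of_dvd hFpos (hdvd i)) (hf i)
  have hrest := key t i 1 (F / f i - 1) (by omega)
  have hoccge : ∀ i' : Fin k, F / f i' ≤
      ((Finset.range F).filter (fun j => S (t + j) = some i')).card := by
    intro i'
    refine le_trans (key t i' 0 (F / f i') (by omega)) (Finset.card_le_card ?_)
    intro j hj
    rw [Finset.mem_filter] at hj ⊢
    exact ⟨hj.1, hj.2.1⟩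
  have hocc_i : F / f i + 1 ≤
      ((Finset.range F).filter (fun j => S (t + j) = some i)).card := by
    have hsub : ((Finset.range F).filter (fun j => S (t + j) = some i ∧ 1 * f i ≤ j))
        ∪ ({j1, j0} : Finset ℕ) ⊆
        (Finset.range F).filter (fun j => S (t + j) = some i) := by
      intro j hj
      rw [Finset.mem_union, Finset.mem_filter] at hj
      rw [Finset.mem_filter, Finset.mem_range]
      rcases hj with hj | hj
      · rw [Finset.mem_range] at hj
        exact ⟨hj.1, hj.2.1⟩
      · rcases Finset.mem_insert.mp hj with rfl | hj
        · exact ⟨lt_of_lt_of_le hj1lt (Nat.le_of_dvd hFpos (hdvd i)), hj1⟩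
        · rw [Finset.mem_singleton] at hj
          subst hj
          exact ⟨lt_of_lt_of_le hj0lt (Nat.le_of_dvd hFpos (hdvd i)), hj0⟩
    have hdisj : Disjoint
        ((Finset.range F).filter (fun j => S (t + j) = some i ∧ 1 * f i ≤ j))
        ({j1, j0} : Finset ℕ) := by
      rw [Finset.disjoint_right]
      intro j hj hj'
      rw [Finset.mem_filter] at hj'
      rcases Finset.mem_insert.mp hj with rfl | hj
      · omega
      · rw [Finset.mem_singleton] at hj
        subst hj
        omega
    have hcard2 : ({j1, j0} : Finset ℕ).card = 2 := Finset.card_pair hne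
    have := Finset.card_le_card hsub
    rw [Finset.card_union_of_disjoint hdisj, hcard2] at this
    omega
  have hlt : ∑ i', F / f i' < ∑ i',
      ((Finset.range F).filter (fun j => S (t + j) = some i')).card :=
    Finset.sum_lt_sum (fun i' _ => hoccge i') ⟨i, Finset.mem_univ i, by omega⟩
  have := hsumcard t
  omega

/-- Density-1 Pinwheel schedules are exactly periodic.
If frequencies have density exactly 1 and `S : ℕ → Option (Fin k)` is a valid
Pinwheel-type schedule, then each task occurs exactly once in each of its
windows, and each task i is scheduled exactly on an arithmetic progression
`{d_i + j·f_i : j ∈ ℕ}` for a unique offset `d_i < f_i`. -/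
theorem density_one_pinwheel_exact (k : ℕ) (f : Fin k → ℕ)
    (hf : ∀ i, 0 < f i)
    (hdens : ∑ i, (1 : ℝ) / (f i : ℝ) = 1)
    (S : ℕ → Option (Fin k))
    (hS : ∀ (i : Fin k) (t : ℕ), ∃ j < f i, S (t + j) = some i) :
    (∀ (i : Fin k) (t : ℕ), ∃! j, j < f i ∧ S (t + j) = some i) ∧
    (∀ i : Fin k, ∃! d, d < f i ∧
      ∀ t : ℕ, S t = some i ↔ ∃ j : ℕ, t = d + j * f i) := by
  have huniq := window_unique_aux k f hf hdens S hS
  refine ⟨huniq, ?_⟩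
  intro i
  obtain ⟨d, ⟨hdlt, hdS⟩, hdu⟩ := huniq i 0
  rw [zero_add] at hdS
  -- forward: S (d + j * f i) = some i for all j
  have hstep : ∀ j : ℕ, S (d + j * f i) = some i := by
    intro j
    induction j with
    | zero => simpa using hdS
    | succ j ih =>
      obtain ⟨j', hj'lt, hj'⟩ := hS i (d + j * f i + 1)
      obtain ⟨c, ⟨hclt, hcS⟩, hcu⟩ := huniq i (d + j * f i)
      have h0 : (0 : ℕ) = c := hcu 0 ⟨hf i, by simpa using ih⟩
      by_cases hcase : 1 + j' < f i
      · have h1 : 1 + j' = c := hcu (1 + j') ⟨hcase, by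
          rw [add_assoc] at hj'; exact hj'⟩
        omega
      · have hj'eq : 1 + j' = f i := by omega
        have : d + (j + 1) * f i = d + j * f i + 1 + j' := by
          have : (j + 1) * f i = j * f i + f i := by ring
          omega
        rw [this]
        exact hj'
  have hmem : ∀ t : ℕ, S t = some i → ∃ j : ℕ, t = d + j * f i := by
    intro t ht
    have htd : d ≤ t := by
      by_contra h
      push_neg at h
      have := hdu t ⟨lt_trans h hdlt, by rwa [zero_add]⟩
      omega
    have hrlt : (t - d) % f i < f i := Nat.mod_lt _ (hf i)
    have hteq : t = d + (t - d) / f i * f i + (t - d) % f i := by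
      have := Nat.div_add_mod' (t - d) (f i)
      omega
    obtain ⟨c, ⟨hclt, hcS⟩, hcu⟩ := huniq i (d + (t - d) / f i * f i)
    have h0 : (0 : ℕ) = c := hcu 0 ⟨hf i, by simpa using hstep ((t - d) / f i)⟩
    have h1 : (t - d) % f i = c := hcu ((t - d) % f i) ⟨hrlt, by rw [← hteq]; exact ht⟩
    exact ⟨(t - d) / f i, by omega⟩
  refine ⟨d, ⟨hdlt, fun t => ⟨hmem t, ?_⟩⟩, ?_⟩
  · rintro ⟨j, rfl⟩
    exact hstep j
  · rintro d' ⟨hd'lt, hd'⟩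
    have hSd' : S d' = some i := (hd' d').mpr ⟨0, by ring⟩
    exact hdu d' ⟨hd'lt, by rwa [zero_add]⟩
end

section
/- Consider seven tasks r, gG, gP, o₁, o₂, o₃, o₄ with frequencies f(r)=3, f(gG)=6, f(gP)=6 and f(o₁)=f(o₂)=f(o₃)=f(o₄)=12, and let S be a valid schedule assigning at most one task to each day (so every window of f consecutive days contains the corresponding task). Suppose additionally that r is scheduled only on days t with t ≡ 0 (mod 3), gG is scheduled only on days t with t ≡ 2 (mod 6), and gP is scheduled only on days t with t ≡ 5 (mod 6). Then each of o₁, o₂, o₃, o₄ is scheduled only on days t with t ≡ 1 (mod 3). (This is the Tension gadget lemma: under a slot-respecting schedule, all four frequency-12 input edges of a tension node must be scheduled in blue slots.) -/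
/-- Tension gadget lemma.
Tasks: 0 = r (freq 3), 1 = gG (freq 6), 2 = gP (freq 6),
3,4,5,6 = o₁,…,o₄ (freq 12). In any valid slot-respecting local schedule
(r in red slots t ≡ 0 mod 3, gG in green slots t ≡ 2 mod 6, gP in purple
slots t ≡ 5 mod 6), all four frequency-12 tasks are scheduled only in
blue slots t ≡ 1 mod 3. -/
theorem tension_gadget (f : Fin 7 → ℕ) (hf : f = ![3, 6, 6, 12, 12, 12, 12])
    (S : ℕ → Option (Fin 7))
    (hS : ∀ (i : Fin 7) (t : ℕ), ∃ j < f i, S (t + j) = some i)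
    (hr : ∀ t : ℕ, S t = some 0 → t % 3 = 0)
    (hgG : ∀ t : ℕ, S t = some 1 → t % 6 = 2)
    (hgP : ∀ t : ℕ, S t = some 2 → t % 6 = 5) :
    ∀ i : Fin 7, 3 ≤ (i : ℕ) → ∀ t : ℕ, S t = some i → t % 3 = 1 := by
  subst hf
  -- every red slot is occupied by task 0
  have hred : ∀ t : ℕ, t % 3 = 0 → S t = some 0 := by
    intro t ht
    obtain ⟨j, hj, hSj⟩ := hS 0 t
    simp only [Matrix.cons_val_zero] at hj
    have := hr _ hSj
    have : j = 0 := by omega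
    simpa [this] using hSj
  -- every green slot is occupied by task 1
  have hgreen : ∀ t : ℕ, t % 6 = 2 → S t = some 1 := by
    intro t ht
    obtain ⟨j, hj, hSj⟩ := hS 1 t
    simp only [Matrix.cons_val_one, Matrix.head_cons, Matrix.cons_val_zero] at hj
    have := hgG _ hSj
    have : j = 0 := by omega
    simpa [this] using hSj
  -- every purple slot is occupied by task 2
  have hpurple : ∀ t : ℕ, t % 6 = 5 → S t = some 2 := by
    intro t ht
    obtain ⟨j, hj, hSj⟩ := hS 2 t
    have hj6 : j < 6 := by simpa using hj
    have := hgP _ hSj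
    have : j = 0 := by omega
    simpa [this] using hSj
  intro i hi t hSt
  have hi0 : i ≠ 0 := by
    intro h; subst h; simp at hi
  have hi1 : i ≠ 1 := by
    intro h; subst h; simp at hi
  have hi2 : i ≠ 2 := by
    intro h; subst h; simp at hi
  have h3 : t % 3 = 0 ∨ t % 3 = 1 ∨ t % 3 = 2 := by omega
  rcases h3 with h | h | h
  · exfalso
    have := hred t h
    rw [hSt] at this
    exact hi0 (by simpa using this)
  · exact h
  · exfalso
    have h6 : t % 6 = 2 ∨ t % 6 = 5 := by omega
    rcases h6 with h6 | h6
    · have := hgreen t h6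
      rw [hSt] at this
      exact hi1 (by simpa using this)
    · have := hpurple t h6
      rw [hSt] at this
      exact hi2 (by simpa using this)
end

section
/- Consider four tasks a, b, gG, gP with frequencies f(a)=3, f(b)=3, f(gG)=6, f(gP)=6, and let S be a valid schedule assigning at most one task to each day (so every window of f consecutive days contains the corresponding task). Suppose additionally that gG is scheduled only on days t with t ≡ 2 (mod 6). Then gG is scheduled on exactly the days t ≡ 2 (mod 6), gP is scheduled on exactly the days t ≡ 5 (mod 6), and either a is scheduled on exactly the days t ≡ 0 (mod 3) and b on exactly the days t ≡ 1 (mod 3), or a is scheduled on exactly the days t ≡ 1 (mod 3) and b on exactly the days t ≡ 0 (mod 3). (This is the Variable gadget lemma: a variable gadget's local schedule must have the form [3_a, 3_b, 6_G, 3_a, 3_b, 6_P], where the choice of which frequency-3 edge occupies the red slots encodes the truth value of the variable.) -/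
/-!
The window of six days starting at `6k` must contain `gG`, which may only sit on day `6k + 2`.
In a window of three days containing a day without `a` or `b`, the other two days carry `a` and
`b`; so days `6k, 6k+1` and `6k+3, 6k+4` carry `a` and `b`, which leaves only day `6k + 5` for
`gP`. Hence the days `≡ 2 (mod 3)` carry neither `a` nor `b`. For `t ≢ 2 (mod 3)`, the day
among `t + 1`, `t + 2` that is not `≡ 2 (mod 3)` shares a three-day window with `t` and one with
`t + 3`, so it carries the task of neither, and `S (t + 3) = S t`: the whole schedule is
determined by `S 0` and `S 1`.
-/

variable {α : Type*} {S : ℕ → Option α}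

def RecursWithin (S : ℕ → Option α) (i : α) (n : ℕ) : Prop :=
  ∀ t, ∃ j < n, S (t + j) = some i

theorem RecursWithin.apply_eq_of_ne {i : α} {n m : ℕ} (h : RecursWithin S i n) (t : ℕ)
    (hne : ∀ j < n, j ≠ m → S (t + j) ≠ some i) : S (t + m) = some i := by
  obtain ⟨j, hj, hSj⟩ := h t
  by_cases hjm : j = m
  · exact hjm ▸ hSj
  · exact absurd hSj (hne j hj hjm)

/-- `hwin` says that `p, q, r` is a permutation of `0, 1, 2`. -/
theorem RecursWithin.window_pair {a b : α} (ha : RecursWithin S a 3) (hb : RecursWithin S b 3)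
    (hab : a ≠ b) {t p q r : ℕ} (hwin : ∀ j < 3, j = p ∨ j = q ∨ j = r)
    (hoff : S (t + p) ≠ some a ∧ S (t + p) ≠ some b) :
    (S (t + q) = some a ∧ S (t + r) = some b) ∨ (S (t + q) = some b ∧ S (t + r) = some a) := by
  obtain ⟨i, hi, hSi⟩ := ha t
  obtain ⟨j, hj, hSj⟩ := hb t
  have hip : i ≠ p := by rintro rfl; exact hoff.1 hSi
  have hjp : j ≠ p := by rintro rfl; exact hoff.2 hSj
  have hij : i ≠ j := by rintro rfl; exact hab (Option.some_injective _ (hSi.symm.trans hSj))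
  have := hwin 0; have := hwin 1; have := hwin 2
  rcases (by omega : (i = q ∧ j = r) ∨ (i = r ∧ j = q)) with ⟨rfl, rfl⟩ | ⟨rfl, rfl⟩
  · exact .inl ⟨hSi, hSj⟩
  · exact .inr ⟨hSj, hSi⟩

structure VariableGadget (S : ℕ → Option α) (a b g p : α) : Prop where
  a_ne_b : a ≠ b
  g_ne_a : g ≠ a
  g_ne_b : g ≠ b
  p_ne_a : p ≠ a
  p_ne_b : p ≠ b
  g_ne_p : g ≠ p
  recurs_a : RecursWithin S a 3
  recurs_b : RecursWithin S b 3
  recurs_g : RecursWithin S g 6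
  recurs_p : RecursWithin S p 6
  green_of_eq_some_g : ∀ t, S t = some g → t % 6 = 2

namespace VariableGadget

variable {a b g p : α} (h : VariableGadget S a b g p)
include h

theorem apply_green (k : ℕ) : S (6 * k + 2) = some g :=
  h.recurs_g.apply_eq_of_ne (6 * k) fun j _ hj hSj => by
    have := h.green_of_eq_some_g _ hSj
    omega

theorem pair_before_green (k : ℕ) :
    (S (6 * k) = some a ∧ S (6 * k + 1) = some b) ∨
      (S (6 * k) = some b ∧ S (6 * k + 1) = some a) := by
  simpa using h.recurs_a.window_pair h.recurs_b h.a_ne_b (t := 6 * k) (p := 2) (q := 0) (r := 1)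
    (by omega) (by simp [h.apply_green k, h.g_ne_a, h.g_ne_b])

theorem pair_after_green (k : ℕ) :
    (S (6 * k + 3) = some a ∧ S (6 * k + 4) = some b) ∨
      (S (6 * k + 3) = some b ∧ S (6 * k + 4) = some a) := by
  simpa [add_assoc] using
    h.recurs_a.window_pair h.recurs_b h.a_ne_b (t := 6 * k + 2) (p := 0) (q := 1) (r := 2)
      (by omega) (by simp [h.apply_green k, h.g_ne_a, h.g_ne_b])

theorem eq_some_a_or_b {t : ℕ} (ht : t % 3 ≠ 2) : S t = some a ∨ S t = some b := by
  obtain ⟨k, j, hj, rfl⟩ : ∃ k j, j < 6 ∧ t = 6 * k + j := ⟨t / 6, t % 6, by omega, by omega⟩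
  have hj' : j = 0 ∨ j = 1 ∨ j = 3 ∨ j = 4 := by omega
  rcases hj' with rfl | rfl | rfl | rfl <;>
  first
  | rcases h.pair_before_green k with ⟨h0, h1⟩ | ⟨h0, h1⟩ <;> simp [h0, h1]
  | rcases h.pair_after_green k with ⟨h3, h4⟩ | ⟨h3, h4⟩ <;> simp [h3, h4]

theorem apply_purple (k : ℕ) : S (6 * k + 5) = some p := by
  refine h.recurs_p.apply_eq_of_ne (6 * k) fun j hj hj5 hSj => ?_
  by_cases hj2 : j = 2
  · subst hj2
    exact h.g_ne_p (Option.some_injective _ ((h.apply_green k).symm.trans hSj))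
  · rcases h.eq_some_a_or_b (t := 6 * k + j) (by omega) with hab | hab <;> rw [hSj] at hab
    exacts [h.p_ne_a (Option.some_injective _ hab), h.p_ne_b (Option.some_injective _ hab)]

theorem eq_some_g_iff (t : ℕ) : S t = some g ↔ t % 6 = 2 := by
  refine ⟨h.green_of_eq_some_g t, fun ht => ?_⟩
  simpa [show 6 * (t / 6) + 2 = t by omega] using h.apply_green (t / 6)

theorem eq_some_p_iff (t : ℕ) : S t = some p ↔ t % 6 = 5 := by
  refine ⟨fun ht => ?_, fun ht => ?_⟩
  · by_cases h3 : t % 3 = 2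
    · by_contra h5
      have := (h.eq_some_g_iff t).2 (by omega)
      exact h.g_ne_p (Option.some_injective _ (this.symm.trans ht))
    · rcases h.eq_some_a_or_b h3 with hab | hab <;> rw [ht] at hab
      exacts [absurd (Option.some_injective _ hab) h.p_ne_a,
        absurd (Option.some_injective _ hab) h.p_ne_b]
  · simpa [show 6 * (t / 6) + 5 = t by omega] using h.apply_purple (t / 6)

theorem off_of_mod_three_eq_two {t : ℕ} (ht : t % 3 = 2) : S t ≠ some a ∧ S t ≠ some b := by
  have h6 : t % 6 = 2 ∨ t % 6 = 5 := by omega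
  rcases h6 with h6 | h6
  · simp [(h.eq_some_g_iff t).2 h6, h.g_ne_a, h.g_ne_b]
  · simp [(h.eq_some_p_iff t).2 h6, h.p_ne_a, h.p_ne_b]

theorem apply_add_three {t : ℕ} (ht : t % 3 ≠ 2) : S (t + 3) = S t := by
  have pair {t p q r : ℕ} (hwin : ∀ j < 3, j = p ∨ j = q ∨ j = r) (hp : (t + p) % 3 = 2) :=
    h.recurs_a.window_pair h.recurs_b h.a_ne_b hwin (h.off_of_mod_three_eq_two hp)
  rcases (by omega : t % 3 = 0 ∨ t % 3 = 1) with h0 | h1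
  · have hw₁ := pair (t := t) (p := 2) (q := 0) (r := 1) (by omega) (by omega)
    have hw₂ := pair (t := t + 1) (p := 1) (q := 0) (r := 2) (by omega) (by omega)
    simp only [add_zero, add_assoc, Nat.reduceAdd] at hw₁ hw₂
    rcases hw₁ with ⟨h₀, h₁⟩ | ⟨h₀, h₁⟩ <;> rcases hw₂ with ⟨h₁', h₃⟩ | ⟨h₁', h₃⟩ <;>
      simp_all [h.a_ne_b, h.a_ne_b.symm]
  · have hw₁ := pair (t := t) (p := 1) (q := 0) (r := 2) (by omega) (by omega)
    have hw₂ := pair (t := t + 1) (p := 0) (q := 1) (r := 2) (by omega) (by omega)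
    simp only [add_zero, add_assoc, Nat.reduceAdd] at hw₁ hw₂
    rcases hw₁ with ⟨h₀, h₂⟩ | ⟨h₀, h₂⟩ <;> rcases hw₂ with ⟨h₂', h₃⟩ | ⟨h₂', h₃⟩ <;>
      simp_all [h.a_ne_b, h.a_ne_b.symm]

theorem apply_mod_three {t : ℕ} (ht : t % 3 ≠ 2) : S t = S (t % 3) := by
  rw [← Nat.mod_add_div t 3]
  generalize t / 3 = n
  induction n with
  | zero => simp
  | succ n ih =>
    rw [mul_add, ← add_assoc, mul_one, h.apply_add_three (by omega), ih]
    simp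

theorem eq_some_iff_of_start {x y : α} (hx : S 0 = some x) (hy : S 1 = some y) (hxy : x ≠ y) :
    (∀ t, S t = some x ↔ t % 3 = 0) ∧ (∀ t, S t = some y ↔ t % 3 = 1) := by
  have hoff {t u : ℕ} (ht : t % 3 = 2) (hu : u < 2) : S t ≠ S u := fun hSu => by
    have := h.off_of_mod_three_eq_two ht
    rcases h.eq_some_a_or_b (t := u) (by omega) with hab | hab <;> simp_all
  constructor <;> intro t
  all_goals
    rcases (by omega : t % 3 = 0 ∨ t % 3 = 1 ∨ t % 3 = 2) with ht | ht | ht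
    all_goals first
      | simp [h.apply_mod_three (t := t) (by omega), ht, hx, hy, hxy, hxy.symm]
      | simpa [ht, hx] using hoff (u := 0) ht
      | simpa [ht, hy] using hoff (u := 1) ht

end VariableGadget

/-- Variable gadget lemma.
Tasks: 0 = a (freq 3), 1 = b (freq 3), 2 = gG (freq 6), 3 = gP (freq 6).
If gG is restricted to green slots (t ≡ 2 mod 6), then gG occupies exactly
the green slots, gP exactly the purple slots (t ≡ 5 mod 6), and either a is
scheduled exactly on the red slots (t ≡ 0 mod 3) and b exactly on the blue
slots (t ≡ 1 mod 3), or vice versa. -/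
theorem variable_gadget (f : Fin 4 → ℕ) (hf : f = ![3, 3, 6, 6])
    (S : ℕ → Option (Fin 4))
    (hS : ∀ (i : Fin 4) (t : ℕ), ∃ j < f i, S (t + j) = some i)
    (hgG : ∀ t : ℕ, S t = some 2 → t % 6 = 2) :
    (∀ t : ℕ, S t = some 2 ↔ t % 6 = 2) ∧
    (∀ t : ℕ, S t = some 3 ↔ t % 6 = 5) ∧
    (((∀ t : ℕ, S t = some 0 ↔ t % 3 = 0) ∧
      (∀ t : ℕ, S t = some 1 ↔ t % 3 = 1)) ∨
     ((∀ t : ℕ, S t = some 0 ↔ t % 3 = 1) ∧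
      (∀ t : ℕ, S t = some 1 ↔ t % 3 = 0))) := by
  subst hf
  have h : VariableGadget S 0 1 2 3 :=
    { a_ne_b := by decide, g_ne_a := by decide, g_ne_b := by decide
      p_ne_a := by decide, p_ne_b := by decide, g_ne_p := by decide
      recurs_a := fun t => by simpa using hS 0 t
      recurs_b := fun t => by simpa using hS 1 t
      recurs_g := fun t => by simpa using hS 2 t
      recurs_p := fun t => by simpa using hS 3 t
      green_of_eq_some_g := hgG }
  refine ⟨h.eq_some_g_iff, h.eq_some_p_iff, ?_⟩
  rcases h.pair_before_green 0 with ⟨h0, h1⟩ | ⟨h0, h1⟩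
  · exact .inl (h.eq_some_iff_of_start h0 h1 (by decide))
  · exact .inr (h.eq_some_iff_of_start h0 h1 (by decide)).symm
end

section
/- Consider five tasks r, b, gP, o₁, o₂ with frequencies f(r)=3, f(b)=3, f(gP)=6 and f(o₁)=f(o₂)=12, and let S be a valid schedule assigning at most one task to each day (so every window of f consecutive days contains the corresponding task). Suppose additionally that r is scheduled only on days t with t ≡ 0 (mod 3), b is scheduled only on days t with t ≡ 1 (mod 3), and gP is scheduled only on days t with t ≡ 5 (mod 6). Then both o₁ and o₂ are scheduled only on days t with t ≡ 2 (mod 6). (This is the slot-splitting gadget lemma for S_{G12}: the two frequency-12 output edges must be scheduled in green slots.) -/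
/-!
A task of frequency `n` that is only scheduled on days `≡ a (mod n)` must occupy every such day,
since each window of `n` consecutive days contains exactly one of them. Hence red, blue and purple
slots are all taken by `r`, `b`, `gP`, and only the green slots remain for the other tasks.
-/

theorem eq_some_of_forall_window_of_mod_eq {α : Type*} {S : ℕ → Option α} {i : α} {n a : ℕ}
    (hwindow : ∀ t, ∃ j < n, S (t + j) = some i) (hslot : ∀ t, S t = some i → t % n = a)
    {t : ℕ} (ht : t % n = a) : S t = some i := by
  obtain ⟨j, hjn, hj⟩ := hwindow t
  have hmod : t + j ≡ t + 0 [MOD n] := (hslot _ hj).trans ht.symm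
  obtain rfl : j = 0 := Nat.eq_zero_of_dvd_of_lt
    ((Nat.modEq_zero_iff_dvd).1 (Nat.ModEq.add_left_cancel' t hmod)) hjn
  exact hj

/-- Slot-splitting gadget lemma (S_{G12}).
Tasks: 0 = r (freq 3), 1 = b (freq 3), 2 = gP (freq 6),
3 = o₁ (freq 12), 4 = o₂ (freq 12). In any valid slot-respecting local
schedule (r in red slots t ≡ 0 mod 3, b in blue slots t ≡ 1 mod 3, gP in
purple slots t ≡ 5 mod 6), the two frequency-12 output tasks are scheduled
only in green slots t ≡ 2 mod 6. -/
theorem slot_splitting_gadget (f : Fin 5 → ℕ) (hf : f = ![3, 3, 6, 12, 12])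
    (S : ℕ → Option (Fin 5))
    (hS : ∀ (i : Fin 5) (t : ℕ), ∃ j < f i, S (t + j) = some i)
    (hr : ∀ t : ℕ, S t = some 0 → t % 3 = 0)
    (hb : ∀ t : ℕ, S t = some 1 → t % 3 = 1)
    (hgP : ∀ t : ℕ, S t = some 2 → t % 6 = 5) :
    (∀ t : ℕ, S t = some 3 → t % 6 = 2) ∧
    (∀ t : ℕ, S t = some 4 → t % 6 = 2) := by
  subst hf
  have hred t := eq_some_of_forall_window_of_mod_eq (n := 3) (hS 0) hr (t := t)
  have hblue t := eq_some_of_forall_window_of_mod_eq (n := 3) (hS 1) hb (t := t)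
  have hpurple t := eq_some_of_forall_window_of_mod_eq (n := 6) (hS 2) hgP (t := t)
  have hgreen (i : Fin 5) (h0 : i ≠ 0) (h1 : i ≠ 1) (h2 : i ≠ 2) (t : ℕ) (hi : S t = some i) :
      t % 6 = 2 := by
    have hnot_red : t % 3 ≠ 0 := fun h => h0 (Option.some_injective _ (hi.symm.trans (hred t h)))
    have hnot_blue : t % 3 ≠ 1 := fun h => h1 (Option.some_injective _ (hi.symm.trans (hblue t h)))
    have hnot_purple : t % 6 ≠ 5 := fun h =>
      h2 (Option.some_injective _ (hi.symm.trans (hpurple t h)))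
    omega
  exact ⟨hgreen 3 (by decide) (by decide) (by decide), hgreen 4 (by decide) (by decide) (by decide)⟩
end
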